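/- arXiv:2111.04858 — 7 statements merged into one kernel-verified Lean document; each statement's English description precedes it below -/
import Mathlib

section
/- Let G = (V,E) be a hypergraph, let e ∈ E, and let U, W ⊆ e be nonempty disjoint subsets. Then the inequality s^odd_{e,U,W}(z) ≥ 0 is valid for P_FR(G), i.e., every z ∈ P_FR(G) satisfies 2z_e − 1 + Σ_{u∈U}(1 − z_u) + Σ_{w∈W}(1 − z_w) + Σ_{v∈e\(U∪W)}(2 − 2z_v) ≥ 0. -/
open Finset

namespace BPO

variable {V E : Type} [DecidableEq V]

/-- Building block `s^inc_{e,v}(z) = z_v - z_e`. -/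
def sInc (e : E) (v : V) (z : V ⊕ E → ℝ) : ℝ := z (Sum.inl v) - z (Sum.inr e)

/-- Building block `s^odd_{e,U,W}(z)`. -/
def sOdd (G : E → Finset V) (e : E) (U W : Finset V) (z : V ⊕ E → ℝ) : ℝ :=
  2 * z (Sum.inr e) - 1 + ∑ u ∈ U, (1 - z (Sum.inl u)) + ∑ w ∈ W, (1 - z (Sum.inl w))
    + ∑ v ∈ G e \ (U ∪ W), (2 - 2 * z (Sum.inl v))

/-- Building block `s^one_{e,U,f}(z)`. -/
def sOne (G : E → Finset V) (e : E) (U : Finset V) (f : E) (z : V ⊕ E → ℝ) : ℝ :=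
  2 * z (Sum.inr e) - 1 + ∑ u ∈ U, (1 - z (Sum.inl u)) + (1 - z (Sum.inr f))
    + ∑ v ∈ G e \ (U ∪ G f), (2 - 2 * z (Sum.inl v))

/-- Building block `s^two_{e,f,g}(z)`. -/
def sTwo (G : E → Finset V) (e f g : E) (z : V ⊕ E → ℝ) : ℝ :=
  2 * z (Sum.inr e) - 1 + (1 - z (Sum.inr f)) + (1 - z (Sum.inr g))
    + ∑ v ∈ G e \ (G f ∪ G g), (2 - 2 * z (Sum.inl v))

/-- Membership in the standard relaxation `P_SR(G)`. -/
def memSR (G : E → Finset V) (z : V ⊕ E → ℝ) : Prop :=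
  (∀ x, 0 ≤ z x ∧ z x ≤ 1) ∧
  (∀ e : E, ∀ v ∈ G e, z (Sum.inl v) - z (Sum.inr e) ≥ 0) ∧
  (∀ e : E, (z (Sum.inr e) - 1) + ∑ v ∈ G e, (1 - z (Sum.inl v)) ≥ 0)

/-- Membership in the flower relaxation `P_FR(G)`: standard relaxation plus all
flower inequalities with at most two neighbors. -/
def memFR (G : E → Finset V) (z : V ⊕ E → ℝ) : Prop :=
  memSR G z ∧
  (∀ f e : E, f ≠ e → (G f ∩ G e).Nonempty →
    (z (Sum.inr f) - 1) + (1 - z (Sum.inr e)) + ∑ v ∈ G f \ G e, (1 - z (Sum.inl v)) ≥ 0) ∧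
  (∀ f e₁ e₂ : E, f ≠ e₁ → f ≠ e₂ → e₁ ≠ e₂ →
    (G f ∩ G e₁).Nonempty → (G f ∩ G e₂).Nonempty → G f ∩ G e₁ ∩ G e₂ = ∅ →
    (z (Sum.inr f) - 1) + (1 - z (Sum.inr e₁)) + (1 - z (Sum.inr e₂))
      + ∑ v ∈ G f \ (G e₁ ∪ G e₂), (1 - z (Sum.inl v)) ≥ 0)

/-- The multilinear polytope `P_ML(G)`. -/
def PML (G : E → Finset V) : Set (V ⊕ E → ℝ) :=
  convexHull ℝ { z | (∀ x, z x = 0 ∨ z x = 1) ∧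
    ∀ e : E, z (Sum.inr e) = ∏ v ∈ G e, z (Sum.inl v) }

/-- A closed walk of length `k ≥ 3`, with nodes `ve i ∈ G (ed (i-1)) ∩ G (ed i)`
and consecutive triple intersections empty (indices cyclic via `ZMod k`). -/
def IsClosedWalk (G : E → Finset V) (k : ℕ) (ve : ZMod k → V) (ed : ZMod k → E) : Prop :=
  3 ≤ k ∧ (∀ i, ve i ∈ G (ed (i - 1)) ∩ G (ed i)) ∧
    ∀ i, G (ed (i - 1)) ∩ G (ed i) ∩ G (ed (i + 1)) = ∅

/-- A signature (`true` = `+`, `false` = `-`) is odd if it has an odd number of `-` signs. -/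
def OddSig (k : ℕ) [NeZero k] (sg : ZMod k → Bool) : Prop :=
  Odd (Finset.univ.filter fun i : ZMod k => sg i = false).card

/-- The length function `ℓ_{(C,σ)}(z)` of a signed closed walk. -/
def lenFun (G : E → Finset V) (k : ℕ) [NeZero k] (ve : ZMod k → V) (ed : ZMod k → E)
    (sg : ZMod k → Bool) (z : V ⊕ E → ℝ) : ℝ :=
  (∑ i ∈ Finset.univ.filter
      (fun i : ZMod k => sg (i - 1) = true ∧ sg i = true ∧ sg (i + 1) = true),
      (sInc (ed i) (ve i) z + sInc (ed i) (ve (i + 1)) z))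
  + (∑ i ∈ Finset.univ.filter
      (fun i : ZMod k => sg (i - 1) = false ∧ sg i = false ∧ sg (i + 1) = false),
      sOdd G (ed i) (G (ed i) ∩ G (ed (i - 1))) (G (ed i) ∩ G (ed (i + 1))) z)
  + (∑ i ∈ Finset.univ.filter
      (fun i : ZMod k => sg (i - 1) = true ∧ sg i = true ∧ sg (i + 1) = false),
      sInc (ed i) (ve i) z)
  + (∑ i ∈ Finset.univ.filter
      (fun i : ZMod k => sg (i - 1) = false ∧ sg i = false ∧ sg (i + 1) = true),
      sOne G (ed i) (G (ed i) ∩ G (ed (i - 1))) (ed (i + 1)) z)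
  + (∑ i ∈ Finset.univ.filter
      (fun i : ZMod k => sg (i - 1) = false ∧ sg i = true ∧ sg (i + 1) = true),
      sInc (ed i) (ve (i + 1)) z)
  + (∑ i ∈ Finset.univ.filter
      (fun i : ZMod k => sg (i - 1) = true ∧ sg i = false ∧ sg (i + 1) = false),
      sOne G (ed i) (G (ed i) ∩ G (ed (i + 1))) (ed (i - 1)) z)
  + (∑ i ∈ Finset.univ.filter
      (fun i : ZMod k => sg (i - 1) = true ∧ sg i = false ∧ sg (i + 1) = true),
      sTwo G (ed i) (ed (i - 1)) (ed (i + 1)) z)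

/-- The set `T` of potential subsequent edge triples. -/
def Trip (G : E → Finset V) (e f g : E) : Prop :=
  (G e ∩ G f).Nonempty ∧ (G f ∩ G g).Nonempty ∧ G e ∩ G f ∩ G g = ∅

/-- Nodes of the auxiliary graph: original nodes, intersections, and edges, each signed. -/
inductive AuxNode (V E : Type) : Type
  | vert : V → Bool → AuxNode V E
  | inter : Finset V → Bool → AuxNode V E
  | edge : E → Bool → AuxNode V E

/-- Adjacency in the auxiliary graph `Ḡ`. -/
def auxAdj (G : E → Finset V) : AuxNode V E → AuxNode V E → Prop
  | .vert v p, .edge e q => q = p ∧ v ∈ G e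
  | .edge e q, .vert v p => q = p ∧ v ∈ G e
  | .inter U p, .inter W q =>
      q = !p ∧ ∃ e f g, Trip G e f g ∧ U = G e ∩ G f ∧ W = G f ∩ G g
  | .edge e p, .inter U q => q = !p ∧ ∃ f g, Trip G e f g ∧ U = G f ∩ G g
  | .inter U q, .edge e p => q = !p ∧ ∃ f g, Trip G e f g ∧ U = G f ∩ G g
  | .edge e p, .edge g q => q = !p ∧ ∃ f, Trip G e f g
  | _, _ => False

/-- Edge lengths `ℓ̄` of the auxiliary graph (minimum over all generating triples). -/
noncomputable def auxLen (G : E → Finset V) (z : V ⊕ E → ℝ) :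
    AuxNode V E → AuxNode V E → ℝ
  | .vert v _, .edge e _ => sInc e v z
  | .edge e _, .vert v _ => sInc e v z
  | .inter U _, .inter W _ =>
      sInf { x : ℝ | ∃ e f g, Trip G e f g ∧ U = G e ∩ G f ∧ W = G f ∩ G g
        ∧ x = sOdd G f U W z }
  | .edge e _, .inter U _ =>
      sInf { x : ℝ | ∃ f g, Trip G e f g ∧ U = G f ∩ G g ∧ x = sOne G f U e z }
  | .inter U _, .edge e _ =>
      sInf { x : ℝ | ∃ f g, Trip G e f g ∧ U = G f ∩ G g ∧ x = sOne G f U e z }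
  | .edge e _, .edge g _ =>
      sInf { x : ℝ | ∃ f, Trip G e f g ∧ x = sTwo G f e g z }
  | _, _ => 0

/-- Two auxiliary nodes are twins if they differ only in the sign component. -/
def Twin : AuxNode V E → AuxNode V E → Prop
  | .vert v p, .vert w q => w = v ∧ q = !p
  | .inter U p, .inter W q => W = U ∧ q = !p
  | .edge e p, .edge f q => f = e ∧ q = !p
  | _, _ => False

/-- Total length of a walk (given as the list of visited nodes) in the auxiliary graph. -/
noncomputable def walkLen (G : E → Finset V) (z : V ⊕ E → ℝ) :
    List (AuxNode V E) → ℝ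
  | a :: b :: rest => auxLen G z a b + walkLen G z (b :: rest)
  | _ => 0

/-- A twin walk in the auxiliary graph: a walk whose endpoints are twins. -/
def IsTwinWalk (G : E → Finset V) (L : List (AuxNode V E)) : Prop :=
  L.Chain' (auxAdj G) ∧
  ∃ a b, L.head? = some a ∧ L.getLast? = some b ∧ Twin a b

/-- A cyclically indexed family of (distinct) edges forming a cycle hypergraph. -/
def IsCycleFam (m : ℕ) [NeZero m] (F : ZMod m → Finset V) : Prop :=
  3 ≤ m ∧ Function.Injective F ∧
  (∀ i : ZMod m, (F i ∩ F (i + 1)).Nonempty) ∧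
  (∀ i j : ZMod m, j ≠ i - 1 → j ≠ i → j ≠ i + 1 → F i ∩ F j = ∅) ∧
  (m = 3 → F 0 ∩ F 1 ∩ F 2 = ∅)

end BPO

/-- `s^odd_{e,U,W}(z) ≥ 0` is valid for `P_FR(G)`. -/
theorem sOdd_nonneg_on_PFR {V E : Type} [DecidableEq V] [Fintype V] [Fintype E]
    (G : E → Finset V) (e : E) (U W : Finset V)
    (hU : U ⊆ G e) (hW : W ⊆ G e) (hUne : U.Nonempty) (hWne : W.Nonempty)
    (hUW : U ∩ W = ∅) (z : V ⊕ E → ℝ) (hz : BPO.memFR G z) :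
    BPO.sOdd G e U W z ≥ 0 := by
  obtain ⟨⟨hbox, _, hedge⟩, _⟩ := hz
  have hdisj : Disjoint U W := Finset.disjoint_iff_inter_eq_empty.2 hUW
  have hsub : U ∪ W ⊆ G e := Finset.union_subset hU hW
  have hsplit : ∑ v ∈ G e \ (U ∪ W), (1 - z (Sum.inl v))
      + ∑ v ∈ U ∪ W, (1 - z (Sum.inl v)) = ∑ v ∈ G e, (1 - z (Sum.inl v)) :=
    Finset.sum_sdiff hsub
  have huw : ∑ v ∈ U ∪ W, (1 - z (Sum.inl v))
      = ∑ v ∈ U, (1 - z (Sum.inl v)) + ∑ v ∈ W, (1 - z (Sum.inl v)) :=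
    Finset.sum_union hdisj
  have hrest : ∑ v ∈ G e \ (U ∪ W), (2 - 2 * z (Sum.inl v))
      = 2 * ∑ v ∈ G e \ (U ∪ W), (1 - z (Sum.inl v)) := by
    rw [Finset.mul_sum]; exact Finset.sum_congr rfl fun v _ => by ring
  have hrestnn : 0 ≤ ∑ v ∈ G e \ (U ∪ W), (1 - z (Sum.inl v)) :=
    Finset.sum_nonneg fun v _ => by linarith [(hbox (Sum.inl v)).2]
  have hze : 0 ≤ z (Sum.inr e) := (hbox (Sum.inr e)).1
  have h1 := hedge e
  unfold BPO.sOdd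
  linarith
end

section
/- Let G = (V,E) be a hypergraph, let e, f ∈ E with e ∩ f ≠ ∅, and let U ⊆ e be nonempty with U ∩ f = ∅. Then the inequality s^one_{e,U,f}(z) ≥ 0 is valid for P_FR(G), i.e., every z ∈ P_FR(G) satisfies 2z_e − 1 + Σ_{u∈U}(1 − z_u) + (1 − z_f) + Σ_{v∈e\(U∪f)}(2 − 2z_v) ≥ 0. -/
open Finset

/-- `s^one_{e,U,f}(z) ≥ 0` is valid for `P_FR(G)`. -/
theorem sOne_nonneg_on_PFR {V E : Type} [DecidableEq V] [Fintype V] [Fintype E]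
    (G : E → Finset V) (e f : E) (hef : (G e ∩ G f).Nonempty)
    (U : Finset V) (hU : U ⊆ G e) (hUne : U.Nonempty) (hUf : U ∩ G f = ∅)
    (z : V ⊕ E → ℝ) (hz : BPO.memFR G z) :
    BPO.sOne G e U f z ≥ 0 := by
  obtain ⟨u0, hu0⟩ := hUne
  have hne : e ≠ f := by
    rintro rfl
    have h1 : u0 ∈ U ∩ G e := Finset.mem_inter.mpr ⟨hu0, hU hu0⟩
    rw [hUf] at h1
    exact absurd h1 (Finset.notMem_empty u0)
  have flower := hz.2.1 e f hne hef
  have hbox := hz.1.1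
  have hsplit : G e \ G f = U ∪ (G e \ (U ∪ G f)) := by
    ext v
    simp only [Finset.mem_sdiff, Finset.mem_union]
    constructor
    · rintro ⟨hv, hvf⟩
      by_cases h : v ∈ U
      · exact Or.inl h
      · exact Or.inr ⟨hv, by tauto⟩
    · rintro (h | ⟨hv, h⟩)
      · refine ⟨hU h, fun hf => ?_⟩
        have : v ∈ U ∩ G f := Finset.mem_inter.mpr ⟨h, hf⟩
        simp [hUf] at this
      · exact ⟨hv, fun hf => h (Or.inr hf)⟩
  have hdisj : Disjoint U (G e \ (U ∪ G f)) := by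
    rw [Finset.disjoint_left]
    intro a ha hb
    simp only [Finset.mem_sdiff, Finset.mem_union] at hb
    exact hb.2 (Or.inl ha)
  have hsum : ∑ v ∈ G e \ G f, (1 - z (Sum.inl v))
      = ∑ v ∈ U, (1 - z (Sum.inl v)) + ∑ v ∈ G e \ (U ∪ G f), (1 - z (Sum.inl v)) := by
    rw [hsplit, Finset.sum_union hdisj]
  have hS2 : ∑ v ∈ G e \ (U ∪ G f), (2 - 2 * z (Sum.inl v))
      = 2 * ∑ v ∈ G e \ (U ∪ G f), (1 - z (Sum.inl v)) := by
    rw [Finset.mul_sum]; exact Finset.sum_congr rfl fun v _ => by ring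
  have hSnn : 0 ≤ ∑ v ∈ G e \ (U ∪ G f), (1 - z (Sum.inl v)) :=
    Finset.sum_nonneg fun v _ => by linarith [(hbox (Sum.inl v)).2]
  have hze : 0 ≤ z (Sum.inr e) := (hbox (Sum.inr e)).1
  rw [hsum] at flower
  unfold BPO.sOne
  rw [hS2]
  linarith
end

section
/- Let G = (V,E) be a hypergraph, let e, f ∈ E with e ∩ f ≠ ∅, and let U ⊆ e be nonempty with U ∩ f = ∅. If z ∈ P_ML(G) ∩ ℤ^{V∪E} and s^one_{e,U,f}(z) = 0, then z_f + ∏_{u∈U} z_u = 1. -/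
open Finset

/-- if `z` is an integer point of `P_ML(G)` and `s^one_{e,U,f}(z) = 0`,
then `z_f + ∏_{u∈U} z_u = 1`. -/
theorem sOne_eq_zero_implication {V E : Type} [DecidableEq V] [Fintype V] [Fintype E]
    (G : E → Finset V) (e f : E) (hef : (G e ∩ G f).Nonempty)
    (U : Finset V) (hU : U ⊆ G e) (hUne : U.Nonempty) (hUf : U ∩ G f = ∅)
    (z : V ⊕ E → ℝ) (hz : z ∈ BPO.PML G)
    (hint : ∀ x, ∃ n : ℤ, z x = (n : ℝ)) (h0 : BPO.sOne G e U f z = 0) :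
    z (Sum.inr f) + (∏ u ∈ U, z (Sum.inl u)) = 1 := by
  -- Step 1: z lies in the unit box
  have hbox : ∀ x, z x ∈ Set.Icc (0:ℝ) 1 := by
    have hsub : BPO.PML G ⊆ Set.pi Set.univ (fun _ : V ⊕ E => Set.Icc (0:ℝ) 1) := by
      apply convexHull_min
      · rintro w ⟨hw, -⟩ x _
        rcases hw x with h | h <;> simp [h]
      · exact convex_pi fun _ _ => convex_Icc 0 1
    exact fun x => hsub hz x (Set.mem_univ x)
  -- Step 2: z is 0/1-valued
  have h01 : ∀ x, z x = 0 ∨ z x = 1 := by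
    intro x
    obtain ⟨n, hn⟩ := hint x
    obtain ⟨hl, hr⟩ := hbox x
    rw [hn] at hl hr ⊢
    have hl' : (0:ℤ) ≤ n := by exact_mod_cast hl
    have hr' : n ≤ 1 := by exact_mod_cast hr
    have : n = 0 ∨ n = 1 := by omega
    rcases this with h | h <;> [left; right] <;> rw [h] <;> norm_num
  -- Abbreviations
  set S1 := ∑ u ∈ U, (1 - z (Sum.inl u)) with hS1def
  set S2 := ∑ v ∈ G e \ (U ∪ G f), (2 - 2 * z (Sum.inl v)) with hS2def
  have hterm1 : ∀ u ∈ U, (0:ℝ) ≤ 1 - z (Sum.inl u) := fun u _ => by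
    have := (hbox (Sum.inl u)).2; linarith
  have hS1nn : (0:ℝ) ≤ S1 := Finset.sum_nonneg hterm1
  have hS2nn : (0:ℝ) ≤ S2 := Finset.sum_nonneg fun v _ => by
    have := (hbox (Sum.inl v)).2; linarith
  have h0' : 2 * z (Sum.inr e) - 1 + S1 + (1 - z (Sum.inr f)) + S2 = 0 := h0
  rcases h01 (Sum.inr e) with he0 | he1
  swap
  · exfalso; rw [he1] at h0'
    have := (hbox (Sum.inr f)).2; linarith
  rw [he0] at h0'
  rcases h01 (Sum.inr f) with hf0 | hf1
  · -- z_f = 0 : then S1 = 0 and S2 = 0, so the product is 1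
    rw [hf0] at h0' ⊢
    have hS1z : S1 = 0 := by linarith
    have hall : ∀ u ∈ U, 1 - z (Sum.inl u) = 0 :=
      (Finset.sum_eq_zero_iff_of_nonneg hterm1).1 hS1z
    have : ∏ u ∈ U, z (Sum.inl u) = 1 :=
      Finset.prod_eq_one fun u hu => by have := hall u hu; linarith
    rw [this]; ring
  · -- z_f = 1 : then S1 + S2 = 1; show the product is 0
    rw [hf1] at h0' ⊢
    have hsum : S1 + S2 = 1 := by linarith
    have hprod : ∏ u ∈ U, z (Sum.inl u) = 0 := by
      by_contra hne
      -- then every z_u = 1, so S1 = 0 and S2 = 1, impossible for a sum of 0/2 terms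
      have hall : ∀ u ∈ U, z (Sum.inl u) = 1 := by
        intro u hu
        rcases h01 (Sum.inl u) with h | h
        · exact absurd (Finset.prod_eq_zero hu h) hne
        · exact h
      have hS1z : S1 = 0 := Finset.sum_eq_zero fun u hu => by rw [hall u hu]; ring
      have hS2one : S2 = 1 := by linarith
      set t := ∑ v ∈ G e \ (U ∪ G f), (1 - z (Sum.inl v)) with ht
      have htS2 : S2 = 2 * t := by
        rw [hS2def, ht, Finset.mul_sum]
        exact Finset.sum_congr rfl fun v _ => by ring
      by_cases hvall : ∀ v ∈ G e \ (U ∪ G f), z (Sum.inl v) = 1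
      · have : t = 0 := Finset.sum_eq_zero fun v hv => by rw [hvall v hv]; ring
        rw [htS2, this] at hS2one; norm_num at hS2one
      · push_neg at hvall
        obtain ⟨v, hv, hvne⟩ := hvall
        have hv0 : z (Sum.inl v) = 0 := (h01 (Sum.inl v)).resolve_right hvne
        have hge : (1:ℝ) ≤ t := by
          have h := Finset.single_le_sum (f := fun w => 1 - z (Sum.inl w))
            (fun w _ => show (0:ℝ) ≤ 1 - z (Sum.inl w) by
              have := (hbox (Sum.inl w)).2; linarith) hv
          rw [hv0] at h
          rw [ht]; linarith
        rw [htS2] at hS2one; linarith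
    rw [hprod]; ring
end

section
/- Let G = (V,E) be a hypergraph and let (C,σ) be an odd signed closed walk in G. Then the simple odd β-cycle inequality ℓ_{(C,σ)}(z) ≥ 1 is valid for the multilinear polytope, i.e., every z ∈ P_ML(G) satisfies ℓ_{(C,σ)}(z) ≥ 1. -/
open Finset

set_option linter.unusedSectionVars false
set_option linter.unnecessarySeqFocus false
namespace SOBCAux

open Finset BPO

variable {V E : Type} [DecidableEq V]

/-! ### Integrality predicate -/

def IsIntR (r : ℝ) : Prop := ∃ n : ℤ, r = (n : ℝ)

lemma IsIntR.add {r s : ℝ} (hr : IsIntR r) (hs : IsIntR s) : IsIntR (r + s) := by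
  obtain ⟨m, rfl⟩ := hr; obtain ⟨n, rfl⟩ := hs; exact ⟨m + n, by push_cast; ring⟩

lemma IsIntR.sub {r s : ℝ} (hr : IsIntR r) (hs : IsIntR s) : IsIntR (r - s) := by
  obtain ⟨m, rfl⟩ := hr; obtain ⟨n, rfl⟩ := hs; exact ⟨m - n, by push_cast; ring⟩

lemma IsIntR.mul {r s : ℝ} (hr : IsIntR r) (hs : IsIntR s) : IsIntR (r * s) := by
  obtain ⟨m, rfl⟩ := hr; obtain ⟨n, rfl⟩ := hs; exact ⟨m * n, by push_cast; ring⟩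

lemma isIntR_zero : IsIntR 0 := ⟨0, by norm_num⟩
lemma isIntR_one : IsIntR 1 := ⟨1, by norm_num⟩
lemma isIntR_two : IsIntR 2 := ⟨2, by norm_num⟩

lemma IsIntR.finsum {α : Type*} (S : Finset α) (f : α → ℝ) (h : ∀ x ∈ S, IsIntR (f x)) :
    IsIntR (∑ x ∈ S, f x) :=
  Finset.sum_induction f IsIntR (fun _ _ => IsIntR.add) isIntR_zero h

/-! ### Facts about 0/1 points -/

section IntPoint

variable {G : E → Finset V} {z : V ⊕ E → ℝ}

lemma z_int (h01 : ∀ x, z x = 0 ∨ z x = 1) (x : V ⊕ E) : IsIntR (z x) := by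
  rcases h01 x with h | h <;> rw [h]
  exacts [isIntR_zero, isIntR_one]

lemma z_nn (h01 : ∀ x, z x = 0 ∨ z x = 1) (x : V ⊕ E) : 0 ≤ z x := by
  rcases h01 x with h | h <;> rw [h] <;> norm_num

lemma z_le1 (h01 : ∀ x, z x = 0 ∨ z x = 1) (x : V ⊕ E) : z x ≤ 1 := by
  rcases h01 x with h | h <;> rw [h] <;> norm_num

lemma sum1_nonneg (h01 : ∀ x, z x = 0 ∨ z x = 1) (S : Finset V) :
    0 ≤ ∑ u ∈ S, (1 - z (Sum.inl u)) :=
  Finset.sum_nonneg fun u _ => by have := z_le1 h01 (Sum.inl u); linarith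

lemma sum2_nonneg (h01 : ∀ x, z x = 0 ∨ z x = 1) (S : Finset V) :
    0 ≤ ∑ u ∈ S, (2 - 2 * z (Sum.inl u)) :=
  Finset.sum_nonneg fun u _ => by have := z_le1 h01 (Sum.inl u); linarith

lemma sum1_ge_one (h01 : ∀ x, z x = 0 ∨ z x = 1) {S : Finset V} {v : V}
    (hv : v ∈ S) (h0 : z (Sum.inl v) = 0) : 1 ≤ ∑ u ∈ S, (1 - z (Sum.inl u)) := by
  have h := Finset.single_le_sum (f := fun u => 1 - z (Sum.inl u))
    (fun u _ => by have := z_le1 h01 (Sum.inl u); linarith) hv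
  beta_reduce at h
  rw [h0] at h; linarith

lemma sum2_ge_two (h01 : ∀ x, z x = 0 ∨ z x = 1) {S : Finset V} {v : V}
    (hv : v ∈ S) (h0 : z (Sum.inl v) = 0) : 2 ≤ ∑ u ∈ S, (2 - 2 * z (Sum.inl u)) := by
  have h := Finset.single_le_sum (f := fun u => 2 - 2 * z (Sum.inl u))
    (fun u _ => by have := z_le1 h01 (Sum.inl u); linarith) hv
  beta_reduce at h
  rw [h0] at h; linarith

lemma sum1_eq_zero_forall (h01 : ∀ x, z x = 0 ∨ z x = 1) {S : Finset V}
    (h : ∑ u ∈ S, (1 - z (Sum.inl u)) = 0) : ∀ u ∈ S, z (Sum.inl u) = 1 := by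
  intro u hu
  have h' := (Finset.sum_eq_zero_iff_of_nonneg
    (fun u _ => by have := z_le1 h01 (Sum.inl u); linarith)).mp h u hu
  linarith

lemma sum1_zero_prod (h01 : ∀ x, z x = 0 ∨ z x = 1) {S : Finset V}
    (h : ∑ u ∈ S, (1 - z (Sum.inl u)) = 0) : ∏ u ∈ S, z (Sum.inl u) = 1 :=
  Finset.prod_eq_one (sum1_eq_zero_forall h01 h)

lemma sum1_ne_zero (h01 : ∀ x, z x = 0 ∨ z x = 1) {S : Finset V}
    (h : ∑ u ∈ S, (1 - z (Sum.inl u)) ≠ 0) :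
    1 ≤ ∑ u ∈ S, (1 - z (Sum.inl u)) ∧ ∏ u ∈ S, z (Sum.inl u) = 0 := by
  have hex : ∃ u ∈ S, (1 - z (Sum.inl u)) ≠ 0 := by
    by_contra hc
    push_neg at hc
    exact h (Finset.sum_eq_zero hc)
  obtain ⟨u, hu, hne⟩ := hex
  have hz0 : z (Sum.inl u) = 0 := by
    rcases h01 (Sum.inl u) with h' | h'
    · exact h'
    · rw [h'] at hne; norm_num at hne
  exact ⟨sum1_ge_one h01 hu hz0, Finset.prod_eq_zero hu hz0⟩

lemma sum2_ne_zero (h01 : ∀ x, z x = 0 ∨ z x = 1) {S : Finset V}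
    (h : ∑ u ∈ S, (2 - 2 * z (Sum.inl u)) ≠ 0) :
    2 ≤ ∑ u ∈ S, (2 - 2 * z (Sum.inl u)) := by
  have hex : ∃ u ∈ S, (2 - 2 * z (Sum.inl u)) ≠ 0 := by
    by_contra hc
    push_neg at hc
    exact h (Finset.sum_eq_zero hc)
  obtain ⟨u, hu, hne⟩ := hex
  have hz0 : z (Sum.inl u) = 0 := by
    rcases h01 (Sum.inl u) with h' | h'
    · exact h'
    · rw [h'] at hne; norm_num at hne
  exact sum2_ge_two h01 hu hz0

lemma prod01 (h01 : ∀ x, z x = 0 ∨ z x = 1) (S : Finset V) :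
    (∏ u ∈ S, z (Sum.inl u)) = 0 ∨ (∏ u ∈ S, z (Sum.inl u)) = 1 := by
  by_cases hex : ∃ u ∈ S, z (Sum.inl u) = 0
  · obtain ⟨u, hu, h0⟩ := hex
    exact Or.inl (Finset.prod_eq_zero hu h0)
  · refine Or.inr (Finset.prod_eq_one fun u hu => ?_)
    rcases h01 (Sum.inl u) with h' | h'
    · exact absurd ⟨u, hu, h'⟩ hex
    · exact h'

variable (hpr : ∀ e : E, z (Sum.inr e) = ∏ v ∈ G e, z (Sum.inl v))

lemma edge_one (h01 : ∀ x, z x = 0 ∨ z x = 1)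
    (hpr : ∀ e : E, z (Sum.inr e) = ∏ v ∈ G e, z (Sum.inl v))
    {e : E} {v : V} (hv : v ∈ G e) (he : z (Sum.inr e) = 1) : z (Sum.inl v) = 1 := by
  rcases h01 (Sum.inl v) with h' | h'
  · exfalso
    rw [hpr e, Finset.prod_eq_zero hv h'] at he
    norm_num at he
  · exact h'

lemma edge_zero (h01 : ∀ x, z x = 0 ∨ z x = 1)
    (hpr : ∀ e : E, z (Sum.inr e) = ∏ v ∈ G e, z (Sum.inl v))
    {e : E} (he : z (Sum.inr e) = 0) : ∃ v ∈ G e, z (Sum.inl v) = 0 := by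
  rw [hpr e] at he
  exact Finset.prod_eq_zero_iff.mp he

/-! ### Building blocks are nonnegative at 0/1 points -/

lemma sInc_nn (h01 : ∀ x, z x = 0 ∨ z x = 1)
    (hpr : ∀ e : E, z (Sum.inr e) = ∏ v ∈ G e, z (Sum.inl v))
    {e : E} {v : V} (hv : v ∈ G e) : 0 ≤ sInc e v z := by
  rcases h01 (Sum.inr e) with he | he
  · have := z_nn h01 (Sum.inl v)
    simp only [sInc, he]; linarith
  · have h1 := edge_one h01 hpr hv he
    simp only [sInc, he, h1]; norm_num

lemma sInc_int (h01 : ∀ x, z x = 0 ∨ z x = 1) (e : E) (v : V) : IsIntR (sInc e v z) :=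
  (z_int h01 _).sub (z_int h01 _)

lemma sOdd_nn (h01 : ∀ x, z x = 0 ∨ z x = 1)
    (hpr : ∀ e : E, z (Sum.inr e) = ∏ v ∈ G e, z (Sum.inl v))
    (e : E) (U W : Finset V) : 0 ≤ sOdd G e U W z := by
  have hU := sum1_nonneg h01 U
  have hW := sum1_nonneg h01 W
  have hR := sum2_nonneg h01 (G e \ (U ∪ W))
  rcases h01 (Sum.inr e) with he | he
  · obtain ⟨v, hv, hv0⟩ := edge_zero h01 hpr he
    simp only [sOdd, he]
    by_cases hvU : v ∈ U
    · have := sum1_ge_one h01 hvU hv0; linarith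
    by_cases hvW : v ∈ W
    · have := sum1_ge_one h01 hvW hv0; linarith
    · have hvR : v ∈ G e \ (U ∪ W) := Finset.mem_sdiff.mpr ⟨hv, by simp [hvU, hvW]⟩
      have := sum2_ge_two h01 hvR hv0; linarith
  · simp only [sOdd, he]; linarith

lemma sOdd_int (h01 : ∀ x, z x = 0 ∨ z x = 1) (e : E) (U W : Finset V) :
    IsIntR (sOdd G e U W z) := by
  refine ((((isIntR_two.mul (z_int h01 _)).sub isIntR_one).add
    (IsIntR.finsum _ _ fun u _ => isIntR_one.sub (z_int h01 _))).add
    (IsIntR.finsum _ _ fun u _ => isIntR_one.sub (z_int h01 _))).add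
    (IsIntR.finsum _ _ fun u _ => isIntR_two.sub (isIntR_two.mul (z_int h01 _)))

lemma sOne_nn (h01 : ∀ x, z x = 0 ∨ z x = 1)
    (hpr : ∀ e : E, z (Sum.inr e) = ∏ v ∈ G e, z (Sum.inl v))
    (e : E) (U : Finset V) (f : E) : 0 ≤ sOne G e U f z := by
  have hU := sum1_nonneg h01 U
  have hR := sum2_nonneg h01 (G e \ (U ∪ G f))
  have hf1 := z_le1 h01 (Sum.inr f)
  rcases h01 (Sum.inr e) with he | he
  · obtain ⟨v, hv, hv0⟩ := edge_zero h01 hpr he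
    simp only [sOne, he]
    by_cases hvU : v ∈ U
    · have := sum1_ge_one h01 hvU hv0; linarith
    by_cases hvf : v ∈ G f
    · have hf0 : z (Sum.inr f) = 0 := by
        rw [hpr f]; exact Finset.prod_eq_zero hvf hv0
      rw [hf0]; linarith
    · have hvR : v ∈ G e \ (U ∪ G f) := Finset.mem_sdiff.mpr ⟨hv, by simp [hvU, hvf]⟩
      have := sum2_ge_two h01 hvR hv0; linarith
  · simp only [sOne, he]; linarith

lemma sOne_int (h01 : ∀ x, z x = 0 ∨ z x = 1) (e : E) (U : Finset V) (f : E) :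
    IsIntR (sOne G e U f z) :=
  ((((isIntR_two.mul (z_int h01 _)).sub isIntR_one).add
    (IsIntR.finsum _ _ fun u _ => isIntR_one.sub (z_int h01 _))).add
    (isIntR_one.sub (z_int h01 _))).add
    (IsIntR.finsum _ _ fun u _ => isIntR_two.sub (isIntR_two.mul (z_int h01 _)))

lemma sTwo_nn (h01 : ∀ x, z x = 0 ∨ z x = 1)
    (hpr : ∀ e : E, z (Sum.inr e) = ∏ v ∈ G e, z (Sum.inl v))
    (e f g : E) : 0 ≤ sTwo G e f g z := by
  have hR := sum2_nonneg h01 (G e \ (G f ∪ G g))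
  have hf1 := z_le1 h01 (Sum.inr f)
  have hg1 := z_le1 h01 (Sum.inr g)
  rcases h01 (Sum.inr e) with he | he
  · obtain ⟨v, hv, hv0⟩ := edge_zero h01 hpr he
    simp only [sTwo, he]
    by_cases hvf : v ∈ G f
    · have hf0 : z (Sum.inr f) = 0 := by
        rw [hpr f]; exact Finset.prod_eq_zero hvf hv0
      rw [hf0]; linarith
    by_cases hvg : v ∈ G g
    · have hg0 : z (Sum.inr g) = 0 := by
        rw [hpr g]; exact Finset.prod_eq_zero hvg hv0
      rw [hg0]; linarith
    · have hvR : v ∈ G e \ (G f ∪ G g) := Finset.mem_sdiff.mpr ⟨hv, by simp [hvf, hvg]⟩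
      have := sum2_ge_two h01 hvR hv0; linarith
  · simp only [sTwo, he]; linarith

lemma sTwo_int (h01 : ∀ x, z x = 0 ∨ z x = 1) (e f g : E) :
    IsIntR (sTwo G e f g z) :=
  ((((isIntR_two.mul (z_int h01 _)).sub isIntR_one).add
    (isIntR_one.sub (z_int h01 _))).add
    (isIntR_one.sub (z_int h01 _))).add
    (IsIntR.finsum _ _ fun u _ => isIntR_two.sub (isIntR_two.mul (z_int h01 _)))

/-! ### Flip lemmas: a zero building block forces a sign flip -/

lemma sOdd_flip (h01 : ∀ x, z x = 0 ∨ z x = 1)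
    (hpr : ∀ e : E, z (Sum.inr e) = ∏ v ∈ G e, z (Sum.inl v))
    {e : E} {U W : Finset V} (hU : U ⊆ G e) (hW : W ⊆ G e)
    (h0 : sOdd G e U W z = 0) :
    ∏ w ∈ W, z (Sum.inl w) = 1 - ∏ u ∈ U, z (Sum.inl u) := by
  simp only [sOdd] at h0
  rcases h01 (Sum.inr e) with he | he
  · rw [he] at h0
    have hUnn := sum1_nonneg h01 U
    have hWnn := sum1_nonneg h01 W
    have hR : ∑ v ∈ G e \ (U ∪ W), (2 - 2 * z (Sum.inl v)) = 0 := by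
      by_contra hc
      have := sum2_ne_zero h01 hc
      linarith
    by_cases hUz : ∑ u ∈ U, (1 - z (Sum.inl u)) = 0
    · rw [sum1_zero_prod h01 hUz]
      have hWs : ∑ w ∈ W, (1 - z (Sum.inl w)) ≠ 0 := by
        intro hWz; rw [hUz, hWz, hR] at h0; norm_num at h0
      rw [(sum1_ne_zero h01 hWs).2]; norm_num
    · have h1 := sum1_ne_zero h01 hUz
      rw [h1.2]
      have hWz : ∑ w ∈ W, (1 - z (Sum.inl w)) = 0 := by linarith [h1.1]
      rw [sum1_zero_prod h01 hWz]; norm_num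
  · exfalso
    have hall : ∀ v ∈ G e, z (Sum.inl v) = 1 := fun v hv => edge_one h01 hpr hv he
    have hU0 : ∑ u ∈ U, (1 - z (Sum.inl u)) = 0 :=
      Finset.sum_eq_zero fun u hu => by rw [hall u (hU hu)]; ring
    have hW0 : ∑ w ∈ W, (1 - z (Sum.inl w)) = 0 :=
      Finset.sum_eq_zero fun w hw => by rw [hall w (hW hw)]; ring
    have hR0 : ∑ v ∈ G e \ (U ∪ W), (2 - 2 * z (Sum.inl v)) = 0 :=
      Finset.sum_eq_zero fun v hv => by
        rw [hall v (Finset.mem_sdiff.mp hv).1]; ring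
    rw [he, hU0, hW0, hR0] at h0
    norm_num at h0

lemma sOne_flip (h01 : ∀ x, z x = 0 ∨ z x = 1)
    (hpr : ∀ e : E, z (Sum.inr e) = ∏ v ∈ G e, z (Sum.inl v))
    {e : E} {U : Finset V} {f : E} (hU : U ⊆ G e)
    (h0 : sOne G e U f z = 0) :
    z (Sum.inr f) = 1 - ∏ u ∈ U, z (Sum.inl u) := by
  simp only [sOne] at h0
  rcases h01 (Sum.inr e) with he | he
  · rw [he] at h0
    have hUnn := sum1_nonneg h01 U
    have hf1 := z_le1 h01 (Sum.inr f)
    have hfnn := z_nn h01 (Sum.inr f)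
    have hR : ∑ v ∈ G e \ (U ∪ G f), (2 - 2 * z (Sum.inl v)) = 0 := by
      by_contra hc
      have := sum2_ne_zero h01 hc
      linarith
    rcases h01 (Sum.inr f) with hf | hf
    · rw [hf]
      have hUz : ∑ u ∈ U, (1 - z (Sum.inl u)) = 0 := by rw [hf] at h0; linarith
      rw [sum1_zero_prod h01 hUz]; norm_num
    · rw [hf]
      have hUz : ∑ u ∈ U, (1 - z (Sum.inl u)) ≠ 0 := by
        intro hc; rw [hf, hc, hR] at h0; norm_num at h0
      rw [(sum1_ne_zero h01 hUz).2]; norm_num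
  · exfalso
    have hall : ∀ v ∈ G e, z (Sum.inl v) = 1 := fun v hv => edge_one h01 hpr hv he
    have hU0 : ∑ u ∈ U, (1 - z (Sum.inl u)) = 0 :=
      Finset.sum_eq_zero fun u hu => by rw [hall u (hU hu)]; ring
    have hR0 : ∑ v ∈ G e \ (U ∪ G f), (2 - 2 * z (Sum.inl v)) = 0 :=
      Finset.sum_eq_zero fun v hv => by
        rw [hall v (Finset.mem_sdiff.mp hv).1]; ring
    have hf1 := z_le1 h01 (Sum.inr f)
    rw [he, hU0, hR0] at h0
    linarith

lemma sTwo_flip (h01 : ∀ x, z x = 0 ∨ z x = 1)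
    (hpr : ∀ e : E, z (Sum.inr e) = ∏ v ∈ G e, z (Sum.inl v))
    {e f g : E} (h0 : sTwo G e f g z = 0) :
    z (Sum.inr g) = 1 - z (Sum.inr f) := by
  simp only [sTwo] at h0
  have hf1 := z_le1 h01 (Sum.inr f)
  have hfnn := z_nn h01 (Sum.inr f)
  have hg1 := z_le1 h01 (Sum.inr g)
  have hgnn := z_nn h01 (Sum.inr g)
  rcases h01 (Sum.inr e) with he | he
  · rw [he] at h0
    have hR : ∑ v ∈ G e \ (G f ∪ G g), (2 - 2 * z (Sum.inl v)) = 0 := by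
      by_contra hc
      have := sum2_ne_zero h01 hc
      linarith
    rw [hR] at h0
    linarith
  · exfalso
    have hall : ∀ v ∈ G e, z (Sum.inl v) = 1 := fun v hv => edge_one h01 hpr hv he
    have hR0 : ∑ v ∈ G e \ (G f ∪ G g), (2 - 2 * z (Sum.inl v)) = 0 :=
      Finset.sum_eq_zero fun v hv => by
        rw [hall v (Finset.mem_sdiff.mp hv).1]; ring
    rw [he, hR0] at h0
    linarith

end IntPoint

/-! ### The interface value function -/

def face (G : E → Finset V) {k : ℕ} (ve : ZMod k → V) (ed : ZMod k → E)
    (sg : ZMod k → Bool) (z : V ⊕ E → ℝ) (i : ZMod k) : ℝ :=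
  if sg i then
    (if sg (i + 1) then z (Sum.inl (ve (i + 1))) else z (Sum.inr (ed i)))
  else
    (if sg (i + 1) then z (Sum.inr (ed (i + 1)))
     else ∏ v ∈ G (ed i) ∩ G (ed (i + 1)), z (Sum.inl v))

lemma face01 {G : E → Finset V} {z : V ⊕ E → ℝ} (h01 : ∀ x, z x = 0 ∨ z x = 1)
    {k : ℕ} (ve : ZMod k → V) (ed : ZMod k → E) (sg : ZMod k → Bool) (i : ZMod k) :
    face G ve ed sg z i = 0 ∨ face G ve ed sg z i = 1 := by
  unfold face
  split_ifs
  · exact h01 _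
  · exact h01 _
  · exact h01 _
  · exact prod01 h01 _

end SOBCAux
namespace SOBCAux

open Finset BPO

variable {V E : Type} [DecidableEq V]

/-! ### Affinity of the length function -/

lemma comb1 (a b : ℝ) (hab : a + b = 1) (x y : V ⊕ E → ℝ) (S : Finset V) :
    ∑ u ∈ S, (1 - (a • x + b • y) (Sum.inl u))
      = a * ∑ u ∈ S, (1 - x (Sum.inl u)) + b * ∑ u ∈ S, (1 - y (Sum.inl u)) := by
  rw [Finset.mul_sum, Finset.mul_sum, ← Finset.sum_add_distrib]
  refine Finset.sum_congr rfl fun u _ => ?_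
  simp only [Pi.add_apply, Pi.smul_apply, smul_eq_mul]
  linarith

lemma comb2 (a b : ℝ) (hab : a + b = 1) (x y : V ⊕ E → ℝ) (S : Finset V) :
    ∑ u ∈ S, (2 - 2 * (a • x + b • y) (Sum.inl u))
      = a * ∑ u ∈ S, (2 - 2 * x (Sum.inl u)) + b * ∑ u ∈ S, (2 - 2 * y (Sum.inl u)) := by
  rw [Finset.mul_sum, Finset.mul_sum, ← Finset.sum_add_distrib]
  refine Finset.sum_congr rfl fun u _ => ?_
  simp only [Pi.add_apply, Pi.smul_apply, smul_eq_mul]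
  linarith

lemma sInc_comb (a b : ℝ) (x y : V ⊕ E → ℝ) (e : E) (v : V) :
    sInc e v (a • x + b • y) = a * sInc e v x + b * sInc e v y := by
  simp only [sInc, Pi.add_apply, Pi.smul_apply, smul_eq_mul]
  ring

lemma sOdd_comb (G : E → Finset V) (a b : ℝ) (hab : a + b = 1) (x y : V ⊕ E → ℝ)
    (e : E) (U W : Finset V) :
    sOdd G e U W (a • x + b • y) = a * sOdd G e U W x + b * sOdd G e U W y := by
  simp only [sOdd]
  rw [comb1 a b hab x y U, comb1 a b hab x y W, comb2 a b hab x y (G e \ (U ∪ W))]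
  simp only [Pi.add_apply, Pi.smul_apply, smul_eq_mul]
  linear_combination hab

lemma sOne_comb (G : E → Finset V) (a b : ℝ) (hab : a + b = 1) (x y : V ⊕ E → ℝ)
    (e : E) (U : Finset V) (f : E) :
    sOne G e U f (a • x + b • y) = a * sOne G e U f x + b * sOne G e U f y := by
  simp only [sOne]
  rw [comb1 a b hab x y U, comb2 a b hab x y (G e \ (U ∪ G f))]
  simp only [Pi.add_apply, Pi.smul_apply, smul_eq_mul]
  linear_combination 0 * hab

lemma sTwo_comb (G : E → Finset V) (a b : ℝ) (hab : a + b = 1) (x y : V ⊕ E → ℝ)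
    (e f g : E) :
    sTwo G e f g (a • x + b • y) = a * sTwo G e f g x + b * sTwo G e f g y := by
  simp only [sTwo]
  rw [comb2 a b hab x y (G e \ (G f ∪ G g))]
  simp only [Pi.add_apply, Pi.smul_apply, smul_eq_mul]
  linear_combination -hab

lemma lenFun_comb (G : E → Finset V) (k : ℕ) [NeZero k] (ve : ZMod k → V)
    (ed : ZMod k → E) (sg : ZMod k → Bool) (a b : ℝ) (hab : a + b = 1)
    (x y : V ⊕ E → ℝ) :
    lenFun G k ve ed sg (a • x + b • y)
      = a * lenFun G k ve ed sg x + b * lenFun G k ve ed sg y := by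
  have H : ∀ (F : Finset (ZMod k)) (f : ZMod k → (V ⊕ E → ℝ) → ℝ),
      (∀ i ∈ F, f i (a • x + b • y) = a * f i x + b * f i y) →
      ∑ i ∈ F, f i (a • x + b • y) = a * ∑ i ∈ F, f i x + b * ∑ i ∈ F, f i y := by
    intro F f hf
    rw [Finset.mul_sum, Finset.mul_sum, ← Finset.sum_add_distrib]
    exact Finset.sum_congr rfl hf
  simp only [lenFun]
  rw [H _ (fun i w => sInc (ed i) (ve i) w + sInc (ed i) (ve (i + 1)) w)
        (fun i _ => by rw [sInc_comb, sInc_comb]; ring),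
      H _ (fun i w => sOdd G (ed i) (G (ed i) ∩ G (ed (i - 1))) (G (ed i) ∩ G (ed (i + 1))) w)
        (fun i _ => by rw [sOdd_comb G a b hab]),
      H _ (fun i w => sInc (ed i) (ve i) w)
        (fun i _ => by rw [sInc_comb]),
      H _ (fun i w => sOne G (ed i) (G (ed i) ∩ G (ed (i - 1))) (ed (i + 1)) w)
        (fun i _ => by rw [sOne_comb G a b hab]),
      H _ (fun i w => sInc (ed i) (ve (i + 1)) w)
        (fun i _ => by rw [sInc_comb]),
      H _ (fun i w => sOne G (ed i) (G (ed i) ∩ G (ed (i + 1))) (ed (i - 1)) w)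
        (fun i _ => by rw [sOne_comb G a b hab]),
      H _ (fun i w => sTwo G (ed i) (ed (i - 1)) (ed (i + 1)) w)
        (fun i _ => by rw [sTwo_comb G a b hab])]
  ring

end SOBCAux
namespace SOBCAux

open Finset BPO

variable {V E : Type} [DecidableEq V]

lemma key_int_point (G : E → Finset V) (k : ℕ) [NeZero k]
    (ve : ZMod k → V) (ed : ZMod k → E) (sg : ZMod k → Bool)
    (hC : IsClosedWalk G k ve ed) (hodd : OddSig k sg)
    (z : V ⊕ E → ℝ) (h01 : ∀ x, z x = 0 ∨ z x = 1)
    (hpr : ∀ e : E, z (Sum.inr e) = ∏ v ∈ G e, z (Sum.inl v)) :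
    1 ≤ lenFun G k ve ed sg z := by
  obtain ⟨hk, hve, htrip⟩ := hC
  have hvei : ∀ i : ZMod k, ve i ∈ G (ed i) := fun i => (Finset.mem_inter.mp (hve i)).2
  have hvei1 : ∀ i : ZMod k, ve (i + 1) ∈ G (ed i) := fun i => by
    have h := (Finset.mem_inter.mp (hve (i + 1))).1
    have : i + 1 - 1 = i := by ring
    rwa [this] at h
  -- nonnegativity of the summands
  have h1nn : ∀ i ∈ Finset.univ.filter
      (fun i : ZMod k => sg (i - 1) = true ∧ sg i = true ∧ sg (i + 1) = true),
      0 ≤ sInc (ed i) (ve i) z + sInc (ed i) (ve (i + 1)) z := fun i _ => by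
    have := sInc_nn h01 hpr (hvei i); have := sInc_nn h01 hpr (hvei1 i); linarith
  have h2nn : ∀ i ∈ Finset.univ.filter
      (fun i : ZMod k => sg (i - 1) = false ∧ sg i = false ∧ sg (i + 1) = false),
      0 ≤ sOdd G (ed i) (G (ed i) ∩ G (ed (i - 1))) (G (ed i) ∩ G (ed (i + 1))) z :=
    fun i _ => sOdd_nn h01 hpr _ _ _
  have h3nn : ∀ i ∈ Finset.univ.filter
      (fun i : ZMod k => sg (i - 1) = true ∧ sg i = true ∧ sg (i + 1) = false),
      0 ≤ sInc (ed i) (ve i) z := fun i _ => sInc_nn h01 hpr (hvei i)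
  have h4nn : ∀ i ∈ Finset.univ.filter
      (fun i : ZMod k => sg (i - 1) = false ∧ sg i = false ∧ sg (i + 1) = true),
      0 ≤ sOne G (ed i) (G (ed i) ∩ G (ed (i - 1))) (ed (i + 1)) z :=
    fun i _ => sOne_nn h01 hpr _ _ _
  have h5nn : ∀ i ∈ Finset.univ.filter
      (fun i : ZMod k => sg (i - 1) = false ∧ sg i = true ∧ sg (i + 1) = true),
      0 ≤ sInc (ed i) (ve (i + 1)) z := fun i _ => sInc_nn h01 hpr (hvei1 i)
  have h6nn : ∀ i ∈ Finset.univ.filter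
      (fun i : ZMod k => sg (i - 1) = true ∧ sg i = false ∧ sg (i + 1) = false),
      0 ≤ sOne G (ed i) (G (ed i) ∩ G (ed (i + 1))) (ed (i - 1)) z :=
    fun i _ => sOne_nn h01 hpr _ _ _
  have h7nn : ∀ i ∈ Finset.univ.filter
      (fun i : ZMod k => sg (i - 1) = true ∧ sg i = false ∧ sg (i + 1) = true),
      0 ≤ sTwo G (ed i) (ed (i - 1)) (ed (i + 1)) z := fun i _ => sTwo_nn h01 hpr _ _ _
  have hS1 := Finset.sum_nonneg h1nn
  have hS2 := Finset.sum_nonneg h2nn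
  have hS3 := Finset.sum_nonneg h3nn
  have hS4 := Finset.sum_nonneg h4nn
  have hS5 := Finset.sum_nonneg h5nn
  have hS6 := Finset.sum_nonneg h6nn
  have hS7 := Finset.sum_nonneg h7nn
  -- the length function is an integer
  have hint : IsIntR (lenFun G k ve ed sg z) := by
    refine (((((((IsIntR.finsum _ _ fun i _ =>
        (sInc_int h01 _ _).add (sInc_int h01 _ _)).add
      (IsIntR.finsum _ _ fun i _ => sOdd_int h01 _ _ _)).add
      (IsIntR.finsum _ _ fun i _ => sInc_int h01 _ _)).add
      (IsIntR.finsum _ _ fun i _ => sOne_int h01 _ _ _)).add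
      (IsIntR.finsum _ _ fun i _ => sInc_int h01 _ _)).add
      (IsIntR.finsum _ _ fun i _ => sOne_int h01 _ _ _)).add
      (IsIntR.finsum _ _ fun i _ => sTwo_int h01 _ _ _))
  by_contra hlt
  push_neg at hlt
  have hnn : 0 ≤ lenFun G k ve ed sg z := by
    simp only [lenFun]; linarith
  obtain ⟨n, hn⟩ := hint
  rw [hn] at hlt hnn
  have hn0 : n = 0 := by
    have h1 : 0 ≤ n := by exact_mod_cast hnn
    have h2 : n < 1 := by exact_mod_cast hlt
    omega
  have hL0 : lenFun G k ve ed sg z = 0 := by rw [hn, hn0]; norm_num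
  simp only [lenFun] at hL0
  -- all seven sums vanish
  have e1 : ∑ i ∈ Finset.univ.filter
      (fun i : ZMod k => sg (i - 1) = true ∧ sg i = true ∧ sg (i + 1) = true),
      (sInc (ed i) (ve i) z + sInc (ed i) (ve (i + 1)) z) = 0 := by linarith
  have e2 : ∑ i ∈ Finset.univ.filter
      (fun i : ZMod k => sg (i - 1) = false ∧ sg i = false ∧ sg (i + 1) = false),
      sOdd G (ed i) (G (ed i) ∩ G (ed (i - 1))) (G (ed i) ∩ G (ed (i + 1))) z = 0 := by
    linarith
  have e3 : ∑ i ∈ Finset.univ.filter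
      (fun i : ZMod k => sg (i - 1) = true ∧ sg i = true ∧ sg (i + 1) = false),
      sInc (ed i) (ve i) z = 0 := by linarith
  have e4 : ∑ i ∈ Finset.univ.filter
      (fun i : ZMod k => sg (i - 1) = false ∧ sg i = false ∧ sg (i + 1) = true),
      sOne G (ed i) (G (ed i) ∩ G (ed (i - 1))) (ed (i + 1)) z = 0 := by linarith
  have e5 : ∑ i ∈ Finset.univ.filter
      (fun i : ZMod k => sg (i - 1) = false ∧ sg i = true ∧ sg (i + 1) = true),
      sInc (ed i) (ve (i + 1)) z = 0 := by linarith
  have e6 : ∑ i ∈ Finset.univ.filter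
      (fun i : ZMod k => sg (i - 1) = true ∧ sg i = false ∧ sg (i + 1) = false),
      sOne G (ed i) (G (ed i) ∩ G (ed (i + 1))) (ed (i - 1)) z = 0 := by linarith
  have e7 : ∑ i ∈ Finset.univ.filter
      (fun i : ZMod k => sg (i - 1) = true ∧ sg i = false ∧ sg (i + 1) = true),
      sTwo G (ed i) (ed (i - 1)) (ed (i + 1)) z = 0 := by linarith
  -- the flip property
  have hflip : ∀ i : ZMod k, face G ve ed sg z i
      = if sg i then face G ve ed sg z (i - 1) else 1 - face G ve ed sg z (i - 1) := by
    intro i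
    have hsub : i - 1 + 1 = i := by ring
    cases hs1 : sg (i - 1) <;> cases hs2 : sg i <;> cases hs3 : sg (i + 1)
    · -- FFF : sOdd
      have h0 := (Finset.sum_eq_zero_iff_of_nonneg h2nn).mp e2 i
        (Finset.mem_filter.mpr ⟨Finset.mem_univ i, hs1, hs2, hs3⟩)
      have h := sOdd_flip h01 hpr Finset.inter_subset_left Finset.inter_subset_left h0
      simp only [face, hsub, hs1, hs2, hs3, if_false, Bool.false_eq_true]
      rw [Finset.inter_comm (G (ed (i - 1)))]
      exact h
    · -- FFT : sOne, left
      have h0 := (Finset.sum_eq_zero_iff_of_nonneg h4nn).mp e4 i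
        (Finset.mem_filter.mpr ⟨Finset.mem_univ i, hs1, hs2, hs3⟩)
      have h := sOne_flip h01 hpr Finset.inter_subset_left h0
      simp only [face, hsub, hs1, hs2, hs3, if_true, if_false, Bool.false_eq_true]
      rw [Finset.inter_comm (G (ed (i - 1)))]
      exact h
    · -- FTF : no term
      simp only [face, hsub, hs1, hs2, hs3, if_true, if_false, Bool.false_eq_true]
    · -- FTT : sInc
      have h0 := (Finset.sum_eq_zero_iff_of_nonneg h5nn).mp e5 i
        (Finset.mem_filter.mpr ⟨Finset.mem_univ i, hs1, hs2, hs3⟩)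
      simp only [sInc] at h0
      simp only [face, hsub, hs1, hs2, hs3, if_true, if_false, Bool.false_eq_true]
      linarith
    · -- TFF : sOne, right
      have h0 := (Finset.sum_eq_zero_iff_of_nonneg h6nn).mp e6 i
        (Finset.mem_filter.mpr ⟨Finset.mem_univ i, hs1, hs2, hs3⟩)
      have h := sOne_flip h01 hpr Finset.inter_subset_left h0
      simp only [face, hsub, hs1, hs2, hs3, if_true, if_false, Bool.false_eq_true]
      linarith
    · -- TFT : sTwo
      have h0 := (Finset.sum_eq_zero_iff_of_nonneg h7nn).mp e7 i
        (Finset.mem_filter.mpr ⟨Finset.mem_univ i, hs1, hs2, hs3⟩)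
      have h := sTwo_flip h01 hpr h0
      simp only [face, hsub, hs1, hs2, hs3, if_true, if_false, Bool.false_eq_true]
      exact h
    · -- TTF : sInc
      have h0 := (Finset.sum_eq_zero_iff_of_nonneg h3nn).mp e3 i
        (Finset.mem_filter.mpr ⟨Finset.mem_univ i, hs1, hs2, hs3⟩)
      simp only [sInc] at h0
      simp only [face, hsub, hs1, hs2, hs3, if_true, if_false, Bool.false_eq_true]
      linarith
    · -- TTT : two sIncs
      have h0 := (Finset.sum_eq_zero_iff_of_nonneg h1nn).mp e1 i
        (Finset.mem_filter.mpr ⟨Finset.mem_univ i, hs1, hs2, hs3⟩)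
      have ha := sInc_nn h01 hpr (hvei i)
      have hb := sInc_nn h01 hpr (hvei1 i)
      simp only [sInc] at h0 ha hb
      simp only [face, hsub, hs1, hs2, hs3, if_true]
      linarith
  -- parity contradiction
  set A : ZMod k → ℝ := face G ve ed sg z with hA
  have hA01 : ∀ i, A i = 0 ∨ A i = 1 := fun i => face01 h01 ve ed sg i
  have hprodcongr : ∏ i : ZMod k, (2 * A i - 1)
      = (∏ i : ZMod k, (if sg i then (1 : ℝ) else -1)) * ∏ i : ZMod k, (2 * A (i - 1) - 1) := by
    rw [← Finset.prod_mul_distrib]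
    refine Finset.prod_congr rfl fun i _ => ?_
    have h := hflip i
    cases hsg : sg i
    · rw [hsg] at h
      simp only [Bool.false_eq_true, if_false] at h ⊢
      rw [h]; ring
    · rw [hsg] at h
      simp only [if_true] at h ⊢
      rw [h]; ring
  have hshift : ∏ i : ZMod k, (2 * A (i - 1) - 1) = ∏ i : ZMod k, (2 * A i - 1) :=
    Fintype.prod_equiv (Equiv.subRight (1 : ZMod k)) _ _ (fun i => rfl)
  have hPne : ∏ i : ZMod k, (2 * A i - 1) ≠ 0 :=
    Finset.prod_ne_zero_iff.mpr fun i _ => by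
      rcases hA01 i with h | h <;> rw [h] <;> norm_num
  rw [hshift] at hprodcongr
  have hQ : (∏ i : ZMod k, (if sg i then (1 : ℝ) else -1)) = 1 :=
    mul_right_cancel₀ hPne (hprodcongr.symm.trans (one_mul _).symm)
  have hQval : (∏ i : ZMod k, (if sg i then (1 : ℝ) else -1))
      = (-1 : ℝ) ^ (Finset.univ.filter fun i : ZMod k => sg i = false).card := by
    rw [← Finset.prod_filter_mul_prod_filter_not Finset.univ (fun i => sg i = true)]
    have ha : ∏ i ∈ Finset.univ.filter (fun i : ZMod k => sg i = true),
        (if sg i then (1 : ℝ) else -1) = 1 :=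
      Finset.prod_eq_one fun i hi => by simp [(Finset.mem_filter.mp hi).2]
    have hb : ∏ i ∈ Finset.univ.filter (fun i : ZMod k => ¬ sg i = true),
        (if sg i then (1 : ℝ) else -1)
        = ∏ _i ∈ Finset.univ.filter (fun i : ZMod k => ¬ sg i = true), (-1 : ℝ) :=
      Finset.prod_congr rfl fun i hi => by simp [(Finset.mem_filter.mp hi).2]
    rw [ha, hb, one_mul, Finset.prod_const]
    congr 1
    apply Finset.card_nbij' id id <;> intro a ha <;> simp only [Finset.coe_filter, Finset.mem_coe, Finset.mem_filter, Finset.mem_univ, true_and, Set.mem_setOf_eq, id] at ha ⊢ <;> simpa using ha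
  rw [hQval, Odd.neg_one_pow hodd] at hQ
  norm_num at hQ

end SOBCAux

/-- simple odd β-cycle inequalities are valid for `P_ML(G)`. -/
theorem simple_odd_beta_cycle_valid {V E : Type} [DecidableEq V] [Fintype V] [Fintype E]
    (G : E → Finset V) (k : ℕ) [NeZero k]
    (ve : ZMod k → V) (ed : ZMod k → E) (sg : ZMod k → Bool)
    (hC : BPO.IsClosedWalk G k ve ed) (hodd : BPO.OddSig k sg)
    (z : V ⊕ E → ℝ) (hz : z ∈ BPO.PML G) :
    BPO.lenFun G k ve ed sg z ≥ 1 := by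

  rw [ge_iff_le]
  have hsub : { w : V ⊕ E → ℝ | (∀ x, w x = 0 ∨ w x = 1) ∧
      ∀ e : E, w (Sum.inr e) = ∏ v ∈ G e, w (Sum.inl v) }
      ⊆ { w : V ⊕ E → ℝ | 1 ≤ BPO.lenFun G k ve ed sg w } := fun w hw =>
    SOBCAux.key_int_point G k ve ed sg hC hodd w hw.1 hw.2
  have hcvx : Convex ℝ { w : V ⊕ E → ℝ | 1 ≤ BPO.lenFun G k ve ed sg w } := by
    intro u hu v hv a b ha hb hab
    simp only [Set.mem_setOf_eq] at hu hv ⊢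
    rw [SOBCAux.lenFun_comb G k ve ed sg a b hab u v]
    have h1 := mul_le_mul_of_nonneg_left hu ha
    have h2 := mul_le_mul_of_nonneg_left hv hb
    nlinarith
  exact convexHull_min hsub hcvx hz
end

section
/- Let G = (V,E) be a hypergraph and let (C,σ) be a signed closed walk in G of length k ≥ 3. Then for every z ∈ ℝ^{V∪E}: ℓ_{(C,σ)}(z) = Σ_{i∈[k], σ(i)=−}(2z_{e_i} + 1) − Σ_{i∈[k], σ(i)=+} 2z_{e_i} + Σ_{i∈[k], σ(i−1)=σ(i)=+} 2z_{v_i} + Σ_{i∈[k], σ(i−1)=σ(i)=−} Σ_{v∈e_{i−1}∩e_i} 2(1 − z_v) + Σ_{i∈[k], σ(i)=−} Σ_{v∈e_i\(e_{i−1}∪e_{i+1})} 2(1 − z_v) − 2·|{ i ∈ [k] : σ(i−1) = σ(i) = − }|. -/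
open Finset

namespace LenAux
open Finset

variable {V E : Type} [DecidableEq V]

noncomputable def cF (G : E → Finset V) {k : ℕ} (ed : ZMod k → E) (sg : ZMod k → Bool)
    (z : V ⊕ E → ℝ) (i : ZMod k) : ℝ :=
  if sg i then 0
  else -1 + ∑ v ∈ G (ed i) \ (G (ed (i - 1)) ∪ G (ed (i + 1))), (2 - 2 * z (Sum.inl v))

noncomputable def lamF (G : E → Finset V) {k : ℕ} (ve : ZMod k → V) (ed : ZMod k → E)
    (sg : ZMod k → Bool) (z : V ⊕ E → ℝ) (i : ZMod k) : ℝ :=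
  if sg i then (if sg (i - 1) then z (Sum.inl (ve i)) - z (Sum.inr (ed i)) else 0)
  else (if sg (i - 1) then 1 - z (Sum.inr (ed (i - 1)))
        else ∑ v ∈ G (ed i) ∩ G (ed (i - 1)), (1 - z (Sum.inl v))) + z (Sum.inr (ed i))

noncomputable def rhoF (G : E → Finset V) {k : ℕ} (ve : ZMod k → V) (ed : ZMod k → E)
    (sg : ZMod k → Bool) (z : V ⊕ E → ℝ) (i : ZMod k) : ℝ :=
  if sg i then (if sg (i + 1) then z (Sum.inl (ve (i + 1))) - z (Sum.inr (ed i)) else 0)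
  else (if sg (i + 1) then 1 - z (Sum.inr (ed (i + 1)))
        else ∑ v ∈ G (ed i) ∩ G (ed (i + 1)), (1 - z (Sum.inl v))) + z (Sum.inr (ed i))

noncomputable def gamF (G : E → Finset V) {k : ℕ} (ve : ZMod k → V) (ed : ZMod k → E)
    (sg : ZMod k → Bool) (z : V ⊕ E → ℝ) (i : ZMod k) : ℝ :=
  if sg i then (if sg (i + 1) then 2 * z (Sum.inl (ve (i + 1))) else 1)
  else (if sg (i + 1) then 1 else 2 * ∑ v ∈ G (ed i) ∩ G (ed (i + 1)), (1 - z (Sum.inl v)))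

noncomputable def delF {k : ℕ} (ed : ZMod k → E) (sg : ZMod k → Bool)
    (z : V ⊕ E → ℝ) (i : ZMod k) : ℝ :=
  if sg i then -z (Sum.inr (ed i)) else z (Sum.inr (ed i))

lemma lenFun_summand (G : E → Finset V) {k : ℕ} [NeZero k] (ve : ZMod k → V)
    (ed : ZMod k → E) (sg : ZMod k → Bool) (z : V ⊕ E → ℝ) (i : ZMod k) :
    (if sg (i - 1) = true ∧ sg i = true ∧ sg (i + 1) = true then
        BPO.sInc (ed i) (ve i) z + BPO.sInc (ed i) (ve (i + 1)) z else 0)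
    + (if sg (i - 1) = false ∧ sg i = false ∧ sg (i + 1) = false then
        BPO.sOdd G (ed i) (G (ed i) ∩ G (ed (i - 1))) (G (ed i) ∩ G (ed (i + 1))) z else 0)
    + (if sg (i - 1) = true ∧ sg i = true ∧ sg (i + 1) = false then
        BPO.sInc (ed i) (ve i) z else 0)
    + (if sg (i - 1) = false ∧ sg i = false ∧ sg (i + 1) = true then
        BPO.sOne G (ed i) (G (ed i) ∩ G (ed (i - 1))) (ed (i + 1)) z else 0)
    + (if sg (i - 1) = false ∧ sg i = true ∧ sg (i + 1) = true then
        BPO.sInc (ed i) (ve (i + 1)) z else 0)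
    + (if sg (i - 1) = true ∧ sg i = false ∧ sg (i + 1) = false then
        BPO.sOne G (ed i) (G (ed i) ∩ G (ed (i + 1))) (ed (i - 1)) z else 0)
    + (if sg (i - 1) = true ∧ sg i = false ∧ sg (i + 1) = true then
        BPO.sTwo G (ed i) (ed (i - 1)) (ed (i + 1)) z else 0)
    = cF G ed sg z i + lamF G ve ed sg z i + rhoF G ve ed sg z i := by
  have h1 : G (ed i) \ (G (ed i) ∩ G (ed (i-1)) ∪ G (ed i) ∩ G (ed (i+1)))
      = G (ed i) \ (G (ed (i-1)) ∪ G (ed (i+1))) := by ext v; simp; tauto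
  have h2 : G (ed i) \ (G (ed i) ∩ G (ed (i-1)) ∪ G (ed (i+1)))
      = G (ed i) \ (G (ed (i-1)) ∪ G (ed (i+1))) := by ext v; simp; tauto
  have h3 : G (ed i) \ (G (ed i) ∩ G (ed (i+1)) ∪ G (ed (i-1)))
      = G (ed i) \ (G (ed (i-1)) ∪ G (ed (i+1))) := by ext v; simp; tauto
  cases hA : sg (i-1) <;> cases hB : sg i <;> cases hC : sg (i+1) <;>
    simp [cF, lamF, rhoF, BPO.sInc, BPO.sOdd, BPO.sOne, BPO.sTwo, hA, hB, hC, h1, h2, h3] <;>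
    ring

lemma rho_lam (G : E → Finset V) {k : ℕ} [NeZero k] (ve : ZMod k → V) (ed : ZMod k → E)
    (sg : ZMod k → Bool) (z : V ⊕ E → ℝ) (i : ZMod k) :
    rhoF G ve ed sg z i + lamF G ve ed sg z (i + 1)
    = gamF G ve ed sg z i + delF ed sg z i + delF ed sg z (i + 1) := by
  have e1 : i + 1 - 1 = i := by ring
  have e2 : G (ed (i+1)) ∩ G (ed i) = G (ed i) ∩ G (ed (i+1)) := inter_comm _ _
  cases hB : sg i <;> cases hC : sg (i + 1) <;>
    simp [rhoF, lamF, gamF, delF, e1, e2, hB, hC] <;> ring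

lemma final_pt (G : E → Finset V) {k : ℕ} [NeZero k] (ve : ZMod k → V) (ed : ZMod k → E)
    (sg : ZMod k → Bool) (z : V ⊕ E → ℝ) (i : ZMod k) :
    cF G ed sg z i + gamF G ve ed sg z i + 2 * delF ed sg z i
    = ((if sg i = false then 2 * z (Sum.inr (ed i)) + 1 else 0)
      - (if sg i = true then 2 * z (Sum.inr (ed i)) else 0)
      + (if sg i = true ∧ sg (i + 1) = true then 2 * z (Sum.inl (ve (i + 1))) else 0)
      + (if sg i = false ∧ sg (i + 1) = false then
          ∑ v ∈ G (ed i) ∩ G (ed (i + 1)), 2 * (1 - z (Sum.inl v)) else 0)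
      + (if sg i = false then
          ∑ v ∈ G (ed i) \ (G (ed (i - 1)) ∪ G (ed (i + 1))), 2 * (1 - z (Sum.inl v)) else 0)
      - 2 * (if sg i = false ∧ sg (i + 1) = false then (1 : ℝ) else 0))
      + ((if sg i = true then (1 : ℝ) else 0) - (if sg (i + 1) = true then (1 : ℝ) else 0)) := by
  have hD : ∑ v ∈ G (ed i) \ (G (ed (i-1)) ∪ G (ed (i+1))), (2 - 2 * z (Sum.inl v))
      = ∑ v ∈ G (ed i) \ (G (ed (i-1)) ∪ G (ed (i+1))), 2 * (1 - z (Sum.inl v)) :=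
    Finset.sum_congr rfl (fun v _ => by ring)
  have hS : ∑ v ∈ G (ed i) ∩ G (ed (i+1)), 2 * (1 - z (Sum.inl v))
      = 2 * ∑ v ∈ G (ed i) ∩ G (ed (i+1)), (1 - z (Sum.inl v)) := by
    rw [Finset.mul_sum]
  cases hB : sg i <;> cases hC : sg (i + 1) <;>
    simp [cF, gamF, delF, hB, hC, hD, hS] <;> ring

end LenAux

open Finset in
/-- the combined expression of the length function (Lemma 2). -/
theorem lenFun_combined {V E : Type} [DecidableEq V] [Fintype V] [Fintype E]
    (G : E → Finset V) (k : ℕ) [NeZero k]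
    (ve : ZMod k → V) (ed : ZMod k → E) (sg : ZMod k → Bool)
    (hC : BPO.IsClosedWalk G k ve ed) (z : V ⊕ E → ℝ) :
    BPO.lenFun G k ve ed sg z =
      (∑ i ∈ Finset.univ.filter (fun i : ZMod k => sg i = false),
        (2 * z (Sum.inr (ed i)) + 1))
      - (∑ i ∈ Finset.univ.filter (fun i : ZMod k => sg i = true),
          2 * z (Sum.inr (ed i)))
      + (∑ i ∈ Finset.univ.filter (fun i : ZMod k => sg (i - 1) = true ∧ sg i = true),
          2 * z (Sum.inl (ve i)))
      + (∑ i ∈ Finset.univ.filter (fun i : ZMod k => sg (i - 1) = false ∧ sg i = false),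
          ∑ v ∈ G (ed (i - 1)) ∩ G (ed i), 2 * (1 - z (Sum.inl v)))
      + (∑ i ∈ Finset.univ.filter (fun i : ZMod k => sg i = false),
          ∑ v ∈ G (ed i) \ (G (ed (i - 1)) ∪ G (ed (i + 1))), 2 * (1 - z (Sum.inl v)))
      - 2 * ((Finset.univ.filter
          (fun i : ZMod k => sg (i - 1) = false ∧ sg i = false)).card : ℝ) := by
  classical
  have hshift : ∀ f : ZMod k → ℝ, (∑ i : ZMod k, f (i + 1)) = ∑ i : ZMod k, f i :=
    fun f => Equiv.sum_comp (Equiv.addRight (1 : ZMod k)) f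
  have e1 : ∀ i : ZMod k, i + 1 - 1 = i := fun i => by ring
  have hL : BPO.lenFun G k ve ed sg z
      = ∑ i : ZMod k, (LenAux.cF G ed sg z i + LenAux.gamF G ve ed sg z i
          + 2 * LenAux.delF ed sg z i) := by
    have s1 : BPO.lenFun G k ve ed sg z
        = ∑ i : ZMod k, (LenAux.cF G ed sg z i + LenAux.lamF G ve ed sg z i
            + LenAux.rhoF G ve ed sg z i) := by
      unfold BPO.lenFun
      simp only [Finset.sum_filter]
      rw [← Finset.sum_add_distrib, ← Finset.sum_add_distrib, ← Finset.sum_add_distrib,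
        ← Finset.sum_add_distrib, ← Finset.sum_add_distrib, ← Finset.sum_add_distrib]
      exact Finset.sum_congr rfl fun i _ => LenAux.lenFun_summand G ve ed sg z i
    have s2 : ∑ i : ZMod k, (LenAux.rhoF G ve ed sg z i + LenAux.lamF G ve ed sg z (i + 1))
        = ∑ i : ZMod k, (LenAux.gamF G ve ed sg z i + LenAux.delF ed sg z i
            + LenAux.delF ed sg z (i + 1)) :=
      Finset.sum_congr rfl fun i _ => LenAux.rho_lam G ve ed sg z i
    have hls : (∑ i : ZMod k, LenAux.lamF G ve ed sg z (i + 1))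
        = ∑ i : ZMod k, LenAux.lamF G ve ed sg z i := hshift _
    have hds : (∑ i : ZMod k, LenAux.delF ed sg z (i + 1))
        = ∑ i : ZMod k, LenAux.delF ed sg z i := hshift _
    rw [s1]
    simp only [Finset.sum_add_distrib] at s2 ⊢
    rw [hls, hds] at s2
    rw [← Finset.mul_sum]
    linarith [s2]
  have h3 : (∑ i ∈ Finset.univ.filter (fun i : ZMod k => sg (i - 1) = true ∧ sg i = true),
        2 * z (Sum.inl (ve i)))
      = ∑ i : ZMod k, (if sg i = true ∧ sg (i + 1) = true
          then 2 * z (Sum.inl (ve (i + 1))) else 0) := by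
    rw [Finset.sum_filter]
    refine ((hshift fun j => if sg (j - 1) = true ∧ sg j = true
      then 2 * z (Sum.inl (ve j)) else 0).symm).trans ?_
    simp only [e1]
  have h4 : (∑ i ∈ Finset.univ.filter (fun i : ZMod k => sg (i - 1) = false ∧ sg i = false),
        ∑ v ∈ G (ed (i - 1)) ∩ G (ed i), 2 * (1 - z (Sum.inl v)))
      = ∑ i : ZMod k, (if sg i = false ∧ sg (i + 1) = false then
          ∑ v ∈ G (ed i) ∩ G (ed (i + 1)), 2 * (1 - z (Sum.inl v)) else 0) := by
    rw [Finset.sum_filter]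
    refine ((hshift fun j => if sg (j - 1) = false ∧ sg j = false then
      ∑ v ∈ G (ed (j - 1)) ∩ G (ed j), 2 * (1 - z (Sum.inl v)) else 0).symm).trans ?_
    simp only [e1]
  have h6 : ((Finset.univ.filter
        (fun i : ZMod k => sg (i - 1) = false ∧ sg i = false)).card : ℝ)
      = ∑ i : ZMod k, (if sg i = false ∧ sg (i + 1) = false then (1 : ℝ) else 0) := by
    rw [Finset.card_filter]
    push_cast
    refine ((hshift fun j => if sg (j - 1) = false ∧ sg j = false
      then (1 : ℝ) else 0).symm).trans ?_
    simp only [e1]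
  have ht : (∑ i : ZMod k, (if sg (i + 1) = true then (1 : ℝ) else 0))
      = ∑ i : ZMod k, (if sg i = true then (1 : ℝ) else 0) :=
    hshift fun j => if sg j = true then (1 : ℝ) else 0
  rw [h3, h4, h6, Finset.sum_filter, Finset.sum_filter, Finset.sum_filter, Finset.mul_sum,
    ← Finset.sum_sub_distrib, ← Finset.sum_add_distrib, ← Finset.sum_add_distrib,
    ← Finset.sum_add_distrib, ← Finset.sum_sub_distrib, hL]
  calc (∑ i : ZMod k, (LenAux.cF G ed sg z i + LenAux.gamF G ve ed sg z i
          + 2 * LenAux.delF ed sg z i))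
      = ∑ i : ZMod k,
          (((if sg i = false then 2 * z (Sum.inr (ed i)) + 1 else 0)
            - (if sg i = true then 2 * z (Sum.inr (ed i)) else 0)
            + (if sg i = true ∧ sg (i + 1) = true then 2 * z (Sum.inl (ve (i + 1))) else 0)
            + (if sg i = false ∧ sg (i + 1) = false then
                ∑ v ∈ G (ed i) ∩ G (ed (i + 1)), 2 * (1 - z (Sum.inl v)) else 0)
            + (if sg i = false then
                ∑ v ∈ G (ed i) \ (G (ed (i - 1)) ∪ G (ed (i + 1))), 2 * (1 - z (Sum.inl v))
                else 0)
            - 2 * (if sg i = false ∧ sg (i + 1) = false then (1 : ℝ) else 0))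
          + ((if sg i = true then (1 : ℝ) else 0)
            - (if sg (i + 1) = true then (1 : ℝ) else 0))) :=
        Finset.sum_congr rfl fun i _ => LenAux.final_pt G ve ed sg z i
    _ = _ := by
        rw [Finset.sum_add_distrib, Finset.sum_sub_distrib, Finset.sum_sub_distrib, ht]
        ring
end

section
/- Let G = (V,E) be a hypergraph and let (C,σ) be a signed closed walk in G (not necessarily odd). Then the length function is nonnegative on P_FR(G): every z ∈ P_FR(G) satisfies ℓ_{(C,σ)}(z) ≥ 0. -/
open Finset

namespace BPO

variable {V E : Type} [DecidableEq V]

private lemma two_mul_sum (z : V ⊕ E → ℝ) (S : Finset V) :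
    ∑ v ∈ S, (2 - 2 * z (Sum.inl v)) = 2 * ∑ v ∈ S, (1 - z (Sum.inl v)) := by
  rw [Finset.mul_sum]; exact Finset.sum_congr rfl fun v _ => by ring

private lemma one_sub_sum_nonneg (z : V ⊕ E → ℝ) (h01 : ∀ x, 0 ≤ z x ∧ z x ≤ 1)
    (S : Finset V) : 0 ≤ ∑ v ∈ S, (1 - z (Sum.inl v)) :=
  Finset.sum_nonneg fun v _ => by linarith [(h01 (Sum.inl v)).2]

lemma sInc_nonneg (G : E → Finset V) (z : V ⊕ E → ℝ) (hz : memSR G z)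
    (e : E) (v : V) (hv : v ∈ G e) : 0 ≤ sInc e v z := by
  have := hz.2.1 e v hv
  unfold sInc; linarith

lemma sOdd_nonneg (G : E → Finset V) (z : V ⊕ E → ℝ) (hz : memSR G z)
    (e : E) (U W : Finset V) (hU : U ⊆ G e) (hW : W ⊆ G e) (hUW : Disjoint U W) :
    0 ≤ sOdd G e U W z := by
  obtain ⟨h01, hinc, hedge⟩ := hz
  have hsplit : ∑ v ∈ G e \ (U ∪ W), (1 - z (Sum.inl v))
      + (∑ u ∈ U, (1 - z (Sum.inl u)) + ∑ w ∈ W, (1 - z (Sum.inl w)))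
      = ∑ v ∈ G e, (1 - z (Sum.inl v)) := by
    rw [← Finset.sum_union hUW, Finset.sum_sdiff (Finset.union_subset hU hW)]
  have hrest := one_sub_sum_nonneg z h01 (G e \ (U ∪ W))
  have hedge' := hedge e
  have hze := (h01 (Sum.inr e)).1
  unfold sOdd
  rw [two_mul_sum]
  linarith

lemma sOne_nonneg (G : E → Finset V) (z : V ⊕ E → ℝ) (hz : memFR G z) (e f : E)
    (U : Finset V) (hU : U ⊆ G e) (hUf : Disjoint U (G f))
    (hef : e ≠ f) (hne : (G e ∩ G f).Nonempty) : 0 ≤ sOne G e U f z := by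
  obtain ⟨⟨h01, hinc, hedge⟩, hfl1, hfl2⟩ := hz
  have hflow := hfl1 e f hef hne
  have hsub : U ⊆ G e \ G f := fun v hv =>
    Finset.mem_sdiff.2 ⟨hU hv, Finset.disjoint_left.1 hUf hv⟩
  have heqset : (G e \ G f) \ U = G e \ (U ∪ G f) := by
    ext v
    simp only [Finset.mem_sdiff, Finset.mem_union]
    tauto
  have hsplit : ∑ v ∈ G e \ (U ∪ G f), (1 - z (Sum.inl v))
      + ∑ u ∈ U, (1 - z (Sum.inl u)) = ∑ v ∈ G e \ G f, (1 - z (Sum.inl v)) := by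
    rw [← heqset, Finset.sum_sdiff hsub]
  have hrest := one_sub_sum_nonneg z h01 (G e \ (U ∪ G f))
  have hze := (h01 (Sum.inr e)).1
  unfold sOne
  rw [two_mul_sum]
  linarith

lemma sTwo_nonneg (G : E → Finset V) (z : V ⊕ E → ℝ) (hz : memFR G z) (e f g : E)
    (hef : e ≠ f) (heg : e ≠ g) (hfg : f ≠ g)
    (hnef : (G e ∩ G f).Nonempty) (hneg : (G e ∩ G g).Nonempty)
    (htrip : G e ∩ G f ∩ G g = ∅) : 0 ≤ sTwo G e f g z := by
  obtain ⟨⟨h01, hinc, hedge⟩, hfl1, hfl2⟩ := hz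
  have hflow := hfl2 e f g hef heg hfg hnef hneg htrip
  have hrest := one_sub_sum_nonneg z h01 (G e \ (G f ∪ G g))
  have hze := (h01 (Sum.inr e)).1
  unfold sTwo
  rw [two_mul_sum]
  linarith

end BPO

/-- the length function of any signed closed walk is nonnegative on `P_FR(G)`. -/
theorem lenFun_nonneg_on_PFR {V E : Type} [DecidableEq V] [Fintype V] [Fintype E]
    (G : E → Finset V) (k : ℕ) [NeZero k]
    (ve : ZMod k → V) (ed : ZMod k → E) (sg : ZMod k → Bool)
    (hC : BPO.IsClosedWalk G k ve ed)
    (z : V ⊕ E → ℝ) (hz : BPO.memFR G z) :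
    BPO.lenFun G k ve ed sg z ≥ 0 := by
  obtain ⟨h3, hmem, htrip⟩ := hC
  have hempty : ∀ (i : ZMod k) (a : V),
      ¬(a ∈ G (ed (i - 1)) ∧ a ∈ G (ed i) ∧ a ∈ G (ed (i + 1))) := by
    intro i a ha
    have h := htrip i
    rw [Finset.eq_empty_iff_forall_notMem] at h
    exact h a (by simp only [Finset.mem_inter]; exact ⟨⟨ha.1, ha.2.1⟩, ha.2.2⟩)
  have hvei : ∀ i : ZMod k, ve i ∈ G (ed (i - 1)) ∧ ve i ∈ G (ed i) := by
    intro i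
    have := hmem i
    simpa only [Finset.mem_inter] using this
  have hvi1 : ∀ i : ZMod k, ve (i + 1) ∈ G (ed i) ∧ ve (i + 1) ∈ G (ed (i + 1)) := by
    intro i
    have := hmem (i + 1)
    rw [add_sub_cancel_right] at this
    simpa only [Finset.mem_inter] using this
  have hne01 : ∀ i : ZMod k, ed (i - 1) ≠ ed i := by
    intro i h
    exact hempty i (ve (i + 1)) ⟨h ▸ (hvi1 i).1, (hvi1 i).1, (hvi1 i).2⟩
  have hne12 : ∀ i : ZMod k, ed i ≠ ed (i + 1) := by
    intro i h
    exact hempty i (ve i) ⟨(hvei i).1, (hvei i).2, h ▸ (hvei i).2⟩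
  have hne02 : ∀ i : ZMod k, ed (i - 1) ≠ ed (i + 1) := by
    intro i h
    exact hempty i (ve i) ⟨(hvei i).1, (hvei i).2, h ▸ (hvei i).1⟩
  have hdisj : ∀ i : ZMod k, ∀ S ⊆ G (ed (i - 1)), ∀ T ⊆ G (ed (i + 1)),
      S ⊆ G (ed i) → Disjoint S T := by
    intro i S hS T hT hS'
    rw [Finset.disjoint_left]
    intro a ha hb
    exact hempty i a ⟨hS ha, hS' ha, hT hb⟩
  have H1 : 0 ≤ ∑ i ∈ Finset.univ.filter
      (fun i : ZMod k => sg (i - 1) = true ∧ sg i = true ∧ sg (i + 1) = true),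
      (BPO.sInc (ed i) (ve i) z + BPO.sInc (ed i) (ve (i + 1)) z) :=
    Finset.sum_nonneg fun i _ => add_nonneg
      (BPO.sInc_nonneg G z hz.1 _ _ (hvei i).2)
      (BPO.sInc_nonneg G z hz.1 _ _ (hvi1 i).1)
  have H2 : 0 ≤ ∑ i ∈ Finset.univ.filter
      (fun i : ZMod k => sg (i - 1) = false ∧ sg i = false ∧ sg (i + 1) = false),
      BPO.sOdd G (ed i) (G (ed i) ∩ G (ed (i - 1))) (G (ed i) ∩ G (ed (i + 1))) z :=
    Finset.sum_nonneg fun i _ =>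
      BPO.sOdd_nonneg G z hz.1 _ _ _ Finset.inter_subset_left Finset.inter_subset_left
        (hdisj i _ Finset.inter_subset_right _ Finset.inter_subset_right
          Finset.inter_subset_left)
  have H3 : 0 ≤ ∑ i ∈ Finset.univ.filter
      (fun i : ZMod k => sg (i - 1) = true ∧ sg i = true ∧ sg (i + 1) = false),
      BPO.sInc (ed i) (ve i) z :=
    Finset.sum_nonneg fun i _ => BPO.sInc_nonneg G z hz.1 _ _ (hvei i).2
  have H4 : 0 ≤ ∑ i ∈ Finset.univ.filter
      (fun i : ZMod k => sg (i - 1) = false ∧ sg i = false ∧ sg (i + 1) = true),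
      BPO.sOne G (ed i) (G (ed i) ∩ G (ed (i - 1))) (ed (i + 1)) z :=
    Finset.sum_nonneg fun i _ =>
      BPO.sOne_nonneg G z hz _ _ _ Finset.inter_subset_left
        (hdisj i _ Finset.inter_subset_right _ (le_refl _) Finset.inter_subset_left)
        (hne12 i) ⟨ve (i + 1), Finset.mem_inter.2 ⟨(hvi1 i).1, (hvi1 i).2⟩⟩
  have H5 : 0 ≤ ∑ i ∈ Finset.univ.filter
      (fun i : ZMod k => sg (i - 1) = false ∧ sg i = true ∧ sg (i + 1) = true),
      BPO.sInc (ed i) (ve (i + 1)) z :=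
    Finset.sum_nonneg fun i _ => BPO.sInc_nonneg G z hz.1 _ _ (hvi1 i).1
  have H6 : 0 ≤ ∑ i ∈ Finset.univ.filter
      (fun i : ZMod k => sg (i - 1) = true ∧ sg i = false ∧ sg (i + 1) = false),
      BPO.sOne G (ed i) (G (ed i) ∩ G (ed (i + 1))) (ed (i - 1)) z :=
    Finset.sum_nonneg fun i _ =>
      BPO.sOne_nonneg G z hz _ _ _ Finset.inter_subset_left
        (by
          rw [Finset.disjoint_left]
          intro a ha hb
          simp only [Finset.mem_inter] at ha
          exact hempty i a ⟨hb, ha.1, ha.2⟩)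
        (hne01 i).symm ⟨ve i, Finset.mem_inter.2 ⟨(hvei i).2, (hvei i).1⟩⟩
  have H7 : 0 ≤ ∑ i ∈ Finset.univ.filter
      (fun i : ZMod k => sg (i - 1) = true ∧ sg i = false ∧ sg (i + 1) = true),
      BPO.sTwo G (ed i) (ed (i - 1)) (ed (i + 1)) z :=
    Finset.sum_nonneg fun i _ =>
      BPO.sTwo_nonneg G z hz _ _ _ (hne01 i).symm (hne12 i) (hne02 i)
        ⟨ve i, Finset.mem_inter.2 ⟨(hvei i).2, (hvei i).1⟩⟩
        ⟨ve (i + 1), Finset.mem_inter.2 ⟨(hvi1 i).1, (hvi1 i).2⟩⟩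
        (by
          rw [Finset.eq_empty_iff_forall_notMem]
          intro a ha
          simp only [Finset.mem_inter] at ha
          exact hempty i a ⟨ha.1.2, ha.1.1, ha.2⟩)
  unfold BPO.lenFun
  linarith
end

section
/- Let G = (V,E) be a hypergraph, let ẑ ∈ P_FR(G), and let Ḡ be the auxiliary graph constructed from ẑ. For each odd signed closed walk (C,σ) in G there exists a twin walk W̄ in Ḡ with ℓ̄(W̄) ≤ 1 + s, where s := ℓ_{(C,σ)}(ẑ) − 1 is the slack of the simple odd β-cycle inequality of (C,σ) at ẑ; in particular, if ℓ_{(C,σ)}(ẑ) < 1, then ℓ̄(W̄) < 1. -/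
open Finset

/-!
Follow `C` once around. At position `i` the walk sits at a node of `Ḡ` determined by `σ(i - 1)`
and `σ(i)`, and the piece leading to position `i + 1` uses auxiliary edges whose lengths, being
minima over all generating triples, are bounded by the building blocks of the `i`-th term of
`ℓ_{(C,σ)}`. A piece stays in its copy of `Ḡ` when `σ(i) = +` and crosses to the other copy when
`σ(i) = -`; as `σ` has an odd number of minus signs, the closed walk lifts to a walk ending at the
twin of its starting node.
-/

namespace BPO

variable {V E : Type} [DecidableEq V]

theorem walkLen_append (G : E → Finset V) (z : V ⊕ E → ℝ) :
    ∀ {l₁ : List (AuxNode V E)} {a : AuxNode V E} (l₂ : List (AuxNode V E)),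
      l₁.getLast? = some a → walkLen G z (l₁ ++ l₂) = walkLen G z l₁ + walkLen G z (a :: l₂)
  | [], _, _, h => by simp at h
  | [_], _, _, h => by
    obtain rfl := Option.some.inj h
    simp [walkLen]
  | _ :: b :: t, a, l₂, h => by
    rw [List.getLast?_cons_cons] at h
    simp only [List.cons_append, walkLen]
    rw [← List.cons_append, walkLen_append G z l₂ h]
    ring

theorem exists_walk_of_segments (G : E → Finset V) (z : V ⊕ E → ℝ)
    (port : ℕ → AuxNode V E) (seg : ℕ → List (AuxNode V E)) (c : ℕ → ℝ)
    (hchain : ∀ n, (port n :: seg n).IsChain (auxAdj G))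
    (hlast : ∀ n, (port n :: seg n).getLast? = some (port (n + 1)))
    (hlen : ∀ n, walkLen G z (port n :: seg n) ≤ c n) (m : ℕ) :
    ∃ L : List (AuxNode V E), L.IsChain (auxAdj G) ∧ L.head? = some (port 0) ∧
      L.getLast? = some (port m) ∧ walkLen G z L ≤ ∑ n ∈ range m, c n := by
  induction m with
  | zero => exact ⟨[port 0], List.isChain_singleton _, rfl, rfl, by simp [walkLen]⟩
  | succ m ih =>
    obtain ⟨L, hL, hhead, hend, hLlen⟩ := ih
    have hne : L ≠ [] := by rintro rfl; simp at hhead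
    refine ⟨L ++ seg m, ?_, ?_, ?_, ?_⟩
    · refine hL.append (List.isChain_cons.1 (hchain m)).2 ?_
      rintro x hx y hy
      obtain rfl : port m = x := by simpa [hend] using hx
      exact (List.isChain_cons.1 (hchain m)).1 y hy
    · rwa [List.head?_append_of_ne_nil _ hne]
    · have := hlast m
      cases h : seg m with
      | nil => simpa [h, hend] using this
      | cons a t =>
        rw [h, List.getLast?_cons_cons] at this
        rwa [List.getLast?_append_of_ne_nil _ (List.cons_ne_nil a t)]
    · rw [walkLen_append G z _ hend, sum_range_succ]
      linarith [hlen m]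

theorem sum_range_natCast_zmod {M : Type*} [AddCommMonoid M] (k : ℕ) [NeZero k]
    (f : ZMod k → M) : ∑ n ∈ range k, f n = ∑ i : ZMod k, f i :=
  sum_bij' (fun n _ => (n : ZMod k)) (fun i _ => i.val) (fun _ _ => mem_univ _)
    (fun i _ => mem_range.2 (ZMod.val_lt i))
    (fun _ hn => ZMod.val_cast_of_lt (mem_range.1 hn))
    (fun i _ => ZMod.natCast_zmod_val i) (fun _ _ => rfl)

theorem Trip.symm {G : E → Finset V} {e f g : E} (h : Trip G e f g) : Trip G g f e := by
  obtain ⟨hef, hfg, hefg⟩ := h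
  refine ⟨by rwa [inter_comm], by rwa [inter_comm], ?_⟩
  rwa [inter_comm (G g), inter_comm, ← inter_assoc]

theorem sInf_le_of_subset_range {ι : Type*} [Finite ι] {s : Set ℝ} {f : ι → ℝ}
    (hs : s ⊆ Set.range f) {x : ℝ} (hx : x ∈ s) : sInf s ≤ x :=
  csInf_le ((Set.finite_range f).subset hs).bddBelow hx

section AuxLen

variable [Finite E] (G : E → Finset V) (z : V ⊕ E → ℝ)

theorem auxLen_inter_inter_le {e f g : E} (h : Trip G e f g) (p q : Bool) :
    auxLen G z (.inter (G e ∩ G f) p) (.inter (G f ∩ G g) q)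
      ≤ sOdd G f (G e ∩ G f) (G f ∩ G g) z :=
  sInf_le_of_subset_range (f := fun x => sOdd G x (G e ∩ G f) (G f ∩ G g) z)
    (by rintro _ ⟨-, x, -, -, -, -, rfl⟩; exact ⟨x, rfl⟩) ⟨e, f, g, h, rfl, rfl, rfl⟩

theorem auxLen_edge_inter_le {e f g : E} (h : Trip G e f g) (p q : Bool) :
    auxLen G z (.edge e p) (.inter (G f ∩ G g) q) ≤ sOne G f (G f ∩ G g) e z :=
  sInf_le_of_subset_range (f := fun x => sOne G x (G f ∩ G g) e z)
    (by rintro _ ⟨x, -, -, -, rfl⟩; exact ⟨x, rfl⟩) ⟨f, g, h, rfl, rfl⟩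

theorem auxLen_inter_edge_le {e f g : E} (h : Trip G e f g) (p q : Bool) :
    auxLen G z (.inter (G f ∩ G g) p) (.edge e q) ≤ sOne G f (G f ∩ G g) e z :=
  sInf_le_of_subset_range (f := fun x => sOne G x (G f ∩ G g) e z)
    (by rintro _ ⟨x, -, -, -, rfl⟩; exact ⟨x, rfl⟩) ⟨f, g, h, rfl, rfl⟩

theorem auxLen_edge_edge_le {e f g : E} (h : Trip G e f g) (p q : Bool) :
    auxLen G z (.edge e p) (.edge g q) ≤ sTwo G f e g z :=
  sInf_le_of_subset_range (f := fun x => sTwo G x e g z)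
    (by rintro _ ⟨x, -, rfl⟩; exact ⟨x, rfl⟩) ⟨f, h, rfl⟩

end AuxLen

theorem IsClosedWalk.trip {G : E → Finset V} {k : ℕ} {ve : ZMod k → V} {ed : ZMod k → E}
    (hC : IsClosedWalk G k ve ed) (i : ZMod k) : Trip G (ed (i - 1)) (ed i) (ed (i + 1)) := by
  refine ⟨⟨ve i, hC.2.1 i⟩, ⟨ve (i + 1), ?_⟩, hC.2.2 i⟩
  simpa using hC.2.1 (i + 1)

section ClosedWalk

variable (G : E → Finset V) {k : ℕ} (ve : ZMod k → V) (ed : ZMod k → E) (sg : ZMod k → Bool)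

/-- The node of copy `p` of `Ḡ` at which the walk reaches position `i` of `C`. -/
def portNode (i : ZMod k) (p : Bool) : AuxNode V E :=
  match sg (i - 1), sg i with
  | true, true => .vert (ve i) p
  | false, true => .edge (ed i) p
  | true, false => .edge (ed (i - 1)) p
  | false, false => .inter (G (ed (i - 1)) ∩ G (ed i)) p

def segment (i : ZMod k) (p : Bool) : List (AuxNode V E) :=
  match sg (i - 1), sg i, sg (i + 1) with
  | true, true, true => [.edge (ed i) p, .vert (ve (i + 1)) p]
  | false, true, true => [.vert (ve (i + 1)) p]
  | true, true, false => [.edge (ed i) p]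
  | false, true, false => []
  | _, false, true => [.edge (ed (i + 1)) (!p)]
  | _, false, false => [.inter (G (ed i) ∩ G (ed (i + 1))) (!p)]

def lenTerm (z : V ⊕ E → ℝ) (i : ZMod k) : ℝ :=
  match sg (i - 1), sg i, sg (i + 1) with
  | true, true, true => sInc (ed i) (ve i) z + sInc (ed i) (ve (i + 1)) z
  | false, false, false =>
    sOdd G (ed i) (G (ed i) ∩ G (ed (i - 1))) (G (ed i) ∩ G (ed (i + 1))) z
  | true, true, false => sInc (ed i) (ve i) z
  | false, false, true => sOne G (ed i) (G (ed i) ∩ G (ed (i - 1))) (ed (i + 1)) z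
  | false, true, true => sInc (ed i) (ve (i + 1)) z
  | true, false, false => sOne G (ed i) (G (ed i) ∩ G (ed (i + 1))) (ed (i - 1)) z
  | true, false, true => sTwo G (ed i) (ed (i - 1)) (ed (i + 1)) z
  | false, true, false => 0

theorem lenFun_eq_sum_lenTerm [NeZero k] (z : V ⊕ E → ℝ) :
    lenFun G k ve ed sg z = ∑ i, lenTerm G ve ed sg z i := by
  simp only [lenFun, sum_filter, ← sum_add_distrib]
  refine sum_congr rfl fun i _ => ?_
  cases h₁ : sg (i - 1) <;> cases h₂ : sg i <;> cases h₃ : sg (i + 1) <;>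
    simp [lenTerm, h₁, h₂, h₃]

theorem twin_portNode (i : ZMod k) (p : Bool) :
    Twin (portNode G ve ed sg i p) (portNode G ve ed sg i (!p)) := by
  unfold portNode
  cases sg (i - 1) <;> cases sg i <;> simp [Twin]

theorem getLast?_portNode_cons_segment (i : ZMod k) (p : Bool) :
    (portNode G ve ed sg i p :: segment G ve ed sg i p).getLast?
      = some (portNode G ve ed sg (i + 1) (if sg i then p else !p)) := by
  cases h₁ : sg (i - 1) <;> cases h₂ : sg i <;> cases h₃ : sg (i + 1) <;>
    simp [portNode, segment, h₁, h₂, h₃]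

variable {G ve ed}

theorem isChain_portNode_cons_segment (hC : IsClosedWalk G k ve ed) (i : ZMod k) (p : Bool) :
    (portNode G ve ed sg i p :: segment G ve ed sg i p).IsChain (auxAdj G) := by
  have hprev := hC.trip i
  have hnext := hprev.symm
  have hi := mem_inter.1 (hC.2.1 i)
  have hi' := mem_inter.1 (by simpa using hC.2.1 (i + 1))
  cases h₁ : sg (i - 1) <;> cases h₂ : sg i <;> cases h₃ : sg (i + 1) <;>
    simp only [portNode, segment, h₁, h₂, h₃, List.isChain_cons_cons, List.isChain_singleton,
      auxAdj, and_true, true_and]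
  case false.false.false => exact ⟨_, _, _, hprev, rfl, rfl⟩
  case false.false.true => exact ⟨(Bool.not_not p).symm, _, _, hnext, inter_comm _ _⟩
  case true.false.false => exact ⟨_, _, hprev, rfl⟩
  case true.false.true => exact ⟨_, hprev⟩
  all_goals tauto

theorem walkLen_portNode_cons_segment_le [Finite E] (hC : IsClosedWalk G k ve ed)
    (z : V ⊕ E → ℝ) (i : ZMod k) (p : Bool) :
    walkLen G z (portNode G ve ed sg i p :: segment G ve ed sg i p) ≤ lenTerm G ve ed sg z i := by
  have hprev := hC.trip i
  have hnext := hprev.symm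
  cases h₁ : sg (i - 1) <;> cases h₂ : sg i <;> cases h₃ : sg (i + 1) <;>
    simp only [portNode, segment, lenTerm, h₁, h₂, h₃, walkLen, add_zero]
  case false.false.false =>
    rw [inter_comm (G (ed i)) (G (ed (i - 1)))]
    exact auxLen_inter_inter_le G z hprev p !p
  case false.false.true =>
    rw [inter_comm (G (ed i)) (G (ed (i - 1))), inter_comm (G (ed (i - 1)))]
    exact auxLen_inter_edge_le G z hnext p !p
  case true.false.false => exact auxLen_edge_inter_le G z hprev p !p
  case true.false.true => exact auxLen_edge_edge_le G z hprev p !p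
  all_goals simp [auxLen]

end ClosedWalk

def walkSign {k : ℕ} (sg : ZMod k → Bool) : ℕ → Bool
  | 0 => true
  | n + 1 => if sg n then walkSign sg n else !walkSign sg n

theorem walkSign_eq_decide_even {k : ℕ} (sg : ZMod k → Bool) (m : ℕ) :
    walkSign sg m = decide (Even ((range m).filter fun n : ℕ => sg n = false).card) := by
  induction m with
  | zero => rfl
  | succ m ih =>
    rw [walkSign, ih, range_add_one, filter_insert]
    cases h : sg m
    · rw [if_pos rfl, card_insert_of_notMem (by simp)]
      simp [Nat.even_add_one, -Nat.not_even_iff_odd]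
    · simp

theorem walkSign_eq_false_of_oddSig {k : ℕ} [NeZero k] {sg : ZMod k → Bool}
    (hodd : OddSig k sg) : walkSign sg k = false := by
  rw [walkSign_eq_decide_even, card_filter,
    sum_range_natCast_zmod k fun i => if sg i = false then 1 else 0, ← card_filter]
  simpa using Nat.not_even_iff_odd.2 hodd

end BPO

theorem closed_walk_to_twin_walk_general {V E : Type} [DecidableEq V] [Fintype E]
    (G : E → Finset V) (zhat : V ⊕ E → ℝ)
    (k : ℕ) [NeZero k] (ve : ZMod k → V) (ed : ZMod k → E) (sg : ZMod k → Bool)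
    (hC : BPO.IsClosedWalk G k ve ed) (hodd : BPO.OddSig k sg) :
    ∃ L : List (BPO.AuxNode V E), BPO.IsTwinWalk G L ∧
      BPO.walkLen G zhat L ≤ 1 + (BPO.lenFun G k ve ed sg zhat - 1) ∧
      (BPO.lenFun G k ve ed sg zhat < 1 → BPO.walkLen G zhat L < 1) := by
  let port (n : ℕ) := BPO.portNode G ve ed sg n (BPO.walkSign sg n)
  obtain ⟨L, hchain, hhead, hlast, hlen⟩ := BPO.exists_walk_of_segments G zhat port
    (fun n => BPO.segment G ve ed sg n (BPO.walkSign sg n)) (fun n => BPO.lenTerm G ve ed sg zhat n)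
    (fun n => BPO.isChain_portNode_cons_segment sg hC _ _)
    (fun n => by simp only [port, Nat.cast_succ]; exact BPO.getLast?_portNode_cons_segment G ve ed sg _ _)
    (fun n => BPO.walkLen_portNode_cons_segment_le sg hC zhat _ _) k
  have hlenFun : BPO.walkLen G zhat L ≤ BPO.lenFun G k ve ed sg zhat := by
    rwa [BPO.lenFun_eq_sum_lenTerm, ← BPO.sum_range_natCast_zmod]
  have htwin : BPO.Twin (port 0) (port k) := by
    simp only [port, BPO.walkSign_eq_false_of_oddSig hodd, ZMod.natCast_self, Nat.cast_zero]
    exact BPO.twin_portNode G ve ed sg 0 true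
  exact ⟨L, ⟨hchain, _, _, hhead, hlast, htwin⟩, by linarith, hlenFun.trans_lt⟩

/-- from an odd signed closed walk in `G` to a twin walk in the
auxiliary graph of length at most `1 + s`, where `s` is the slack of the
corresponding simple odd β-cycle inequality at `ẑ`. -/
theorem closed_walk_to_twin_walk {V E : Type} [DecidableEq V] [Fintype V] [Fintype E]
    (G : E → Finset V) (zhat : V ⊕ E → ℝ) (hz : BPO.memFR G zhat)
    (k : ℕ) [NeZero k] (ve : ZMod k → V) (ed : ZMod k → E) (sg : ZMod k → Bool)
    (hC : BPO.IsClosedWalk G k ve ed) (hodd : BPO.OddSig k sg) :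
    ∃ L : List (BPO.AuxNode V E), BPO.IsTwinWalk G L ∧
      BPO.walkLen G zhat L ≤ 1 + (BPO.lenFun G k ve ed sg zhat - 1) ∧
      (BPO.lenFun G k ve ed sg zhat < 1 → BPO.walkLen G zhat L < 1) :=
  closed_walk_to_twin_walk_general G zhat k ve ed sg hC hodd
end
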